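/- arXiv:2401.04006 — 7 statements merged into one kernel-verified Lean document; each statement's English description precedes it below -/
import Mathlib

section
/- Let f : ℝⁿ → ℝ be a smooth positive function and let g = log f. Then for each k ≤ n, the k-th mixed partial derivative satisfies ∂₁⋯∂ₖ f = f · Σ_{I ∈ Π_k} ∂_I g, where Π_k is the set of partitions of {1,…,k} into nonempty blocks, and for a partition I = {A₁,…,A_l}, ∂_I g denotes the product over blocks A ∈ I of (∏_{i∈A} ∂_i) g. -/
open scoped BigOperators ContDiff

/-- The iterated mixed partial derivative `∂_{i₁} ⋯ ∂_{i_r} f` of a function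
`f : ℝⁿ → ℝ`, taken along the list of coordinate directions `l = [i₁, …, i_r]`. -/
noncomputable def mixedPartial {n : ℕ} (l : List (Fin n)) (f : (Fin n → ℝ) → ℝ) :
    (Fin n → ℝ) → ℝ :=
  l.foldr (fun i F => fun x => fderiv ℝ F x (Pi.single i 1)) f

namespace MPaux

variable {n : ℕ}

/-- single directional partial derivative -/
noncomputable def pd (i : Fin n) (F : (Fin n → ℝ) → ℝ) : (Fin n → ℝ) → ℝ :=
  fun x => fderiv ℝ F x (Pi.single i 1)

lemma mixedPartial_nil (F : (Fin n → ℝ) → ℝ) : mixedPartial [] F = F := rfl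

lemma mixedPartial_cons (i : Fin n) (l : List (Fin n)) (F : (Fin n → ℝ) → ℝ) :
    mixedPartial (i :: l) F = pd i (mixedPartial l F) := rfl

lemma contDiff_pd {F : (Fin n → ℝ) → ℝ} (hF : ContDiff ℝ ∞ F) (i : Fin n) :
    ContDiff ℝ ∞ (pd i F) :=
  (hF.fderiv_right (by exact_mod_cast le_rfl)).clm_apply contDiff_const

lemma pd_comm {F : (Fin n → ℝ) → ℝ} (hF : ContDiff ℝ ∞ F) (i j : Fin n) :
    pd i (pd j F) = pd j (pd i F) := by
  have hd : Differentiable ℝ (fderiv ℝ F) :=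
    (hF.fderiv_right (m := ∞) (by exact_mod_cast le_rfl)).differentiable
      (by simp)
  have key : ∀ a b : Fin n, pd a (pd b F) = fun x =>
      fderiv ℝ (fderiv ℝ F) x (Pi.single a 1) (Pi.single b 1) := by
    intro a b
    funext x
    have : pd b F = fun y => (fderiv ℝ F y) (Pi.single b 1) := rfl
    rw [pd, this]
    rw [fderiv_clm_apply (hd x) (differentiableAt_const _)]
    simp
  rw [key, key]
  funext x
  have hsymm : IsSymmSndFDerivAt ℝ F x :=
    (hF.contDiffAt).isSymmSndFDerivAt (by simp; exact WithTop.coe_le_coe.2 le_top)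
  exact hsymm _ _

lemma contDiff_mixedPartial {F : (Fin n → ℝ) → ℝ} (hF : ContDiff ℝ ∞ F) (l : List (Fin n)) :
    ContDiff ℝ ∞ (mixedPartial l F) := by
  induction l with
  | nil => exact hF
  | cons i l ih => exact contDiff_pd ih i

lemma mixedPartial_perm {l l' : List (Fin n)} (h : l.Perm l') :
    ∀ F : (Fin n → ℝ) → ℝ, ContDiff ℝ ∞ F → mixedPartial l F = mixedPartial l' F := by
  induction h with
  | nil => intro F _; rfl
  | cons a _ ih =>
      intro F hF
      rw [mixedPartial_cons, mixedPartial_cons, ih F hF]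
  | swap a b l =>
      intro F hF
      rw [mixedPartial_cons, mixedPartial_cons, mixedPartial_cons, mixedPartial_cons,
        pd_comm (contDiff_mixedPartial hF l)]
  | trans h₁ h₂ ih₁ ih₂ =>
      intro F hF
      rw [ih₁ F hF, ih₂ F hF]

end MPaux


namespace MPaux

variable {α : Type*} [DecidableEq α] {a : α} {s : Finset α}

/-- Extend a partition of `s` by the new singleton block `{a}`. -/
noncomputable def addSingleton (ha : a ∉ s) (P : Finpartition s) : Finpartition (insert a s) :=
  P.extend (b := {a}) (Finset.singleton_ne_empty a)
    (Finset.disjoint_singleton_right.2 ha)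
    (by rw [Finset.sup_eq_union, Finset.union_comm, ← Finset.insert_eq])

lemma addSingleton_parts (ha : a ∉ s) (P : Finpartition s) :
    (addSingleton ha P).parts = insert {a} P.parts := rfl

/-- Insert `a` into the block `A` of the partition `P` of `s`. -/
def addToBlock (ha : a ∉ s) (P : Finpartition s) {A : Finset α} (hA : A ∈ P.parts) :
    Finpartition (insert a s) where
  parts := insert (insert a A) (P.parts.erase A)
  supIndep := by
    rw [Finset.supIndep_iff_pairwiseDisjoint, Finset.coe_insert]
    refine Set.PairwiseDisjoint.insert
      (P.supIndep.pairwiseDisjoint.subset ?_) ?_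
    · intro B hB
      exact Finset.mem_coe.2 (Finset.mem_of_mem_erase (Finset.mem_coe.1 hB))
    · intro B hB _
      have hB' : B ∈ P.parts.erase A := hB
      have hBP : B ∈ P.parts := Finset.mem_of_mem_erase hB'
      have hBA : B ≠ A := Finset.ne_of_mem_erase hB'
      have haB : a ∉ B := fun h => ha (P.le hBP h)
      have hdisj : Disjoint A B := P.disjoint hA hBP (Ne.symm hBA)
      exact Finset.disjoint_insert_left.2 ⟨haB, hdisj⟩
  sup_parts := by
    have h1 : (insert A (P.parts.erase A)).sup id = s := by
      rw [Finset.insert_erase hA, P.sup_parts]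
    rw [Finset.sup_insert, id_eq, Finset.sup_eq_union] at h1
    rw [Finset.sup_insert, id_eq, Finset.sup_eq_union, Finset.insert_union, h1]
  bot_notMem := by
    intro h
    rcases Finset.mem_insert.1 h with h | h
    · exact (Finset.insert_ne_empty a A) h.symm
    · exact P.bot_notMem (Finset.mem_of_mem_erase h)

lemma addToBlock_parts (ha : a ∉ s) (P : Finpartition s) {A : Finset α} (hA : A ∈ P.parts) :
    (addToBlock ha P hA).parts = insert (insert a A) (P.parts.erase A) := rfl

/-- combined forward map -/
noncomputable def phi (ha : a ∉ s) :
    ((P : Finpartition s) × Option {A // A ∈ P.parts}) → Finpartition (insert a s)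
  | ⟨P, none⟩ => addSingleton ha P
  | ⟨P, some ⟨_, hA⟩⟩ => addToBlock ha P hA

/-- change the underlying set of a finpartition along an equality -/
def pcopy {t : Finset α} (P : Finpartition s) (h : s = t) : Finpartition t where
  parts := P.parts
  supIndep := P.supIndep
  sup_parts := h ▸ P.sup_parts
  bot_notMem := P.bot_notMem

/-- restriction of a partition of `insert a s` to `s` -/
noncomputable def rest (ha : a ∉ s) (Q : Finpartition (insert a s)) : Finpartition s :=
  pcopy (Q.avoid {a}) (by rw [← Finset.erase_eq, Finset.erase_insert ha])

lemma mem_rest (ha : a ∉ s) (Q : Finpartition (insert a s)) {c : Finset α} :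
    c ∈ (rest ha Q).parts ↔ ∃ d ∈ Q.parts, ¬d ⊆ {a} ∧ d.erase a = c := by
  have : (rest ha Q).parts = (Q.avoid {a}).parts := rfl
  rw [this, Finpartition.mem_avoid]
  refine exists_congr fun d => and_congr_right fun _ => and_congr ?_ ?_
  · rw [Finset.le_iff_subset]
  · rw [Finset.erase_eq]

end MPaux

namespace MPaux2
open MPaux

variable {α : Type*} [DecidableEq α] {a : α} {s : Finset α}

lemma notsub_singleton {Q : Finpartition (insert a s)} {d : Finset α}
    (hd : d ∈ Q.parts) (had : a ∉ d) : ¬ d ⊆ {a} := by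
  intro hsub
  obtain ⟨b, hb⟩ := Q.nonempty_of_mem_parts hd
  have : b = a := Finset.mem_singleton.1 (hsub hb)
  exact had (this ▸ hb)

lemma erase_mem_rest (ha : a ∉ s) (Q : Finpartition (insert a s))
    (h : Q.part a ≠ {a}) : (Q.part a).erase a ∈ (rest ha Q).parts := by
  rw [mem_rest]
  refine ⟨Q.part a, (Q.part_mem.2 (Finset.mem_insert_self a s)), ?_, by rw [Finset.erase_eq]⟩
  intro hsub
  exact h (Finset.Subset.antisymm hsub
    (Finset.singleton_subset_iff.2 (Q.mem_part (Finset.mem_insert_self a s))))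

noncomputable def psi (ha : a ∉ s) (Q : Finpartition (insert a s)) :
    (P : Finpartition s) × Option {A // A ∈ P.parts} :=
  if h : Q.part a = {a} then ⟨rest ha Q, none⟩
  else ⟨rest ha Q, some ⟨(Q.part a).erase a, erase_mem_rest ha Q h⟩⟩

lemma sigma_eq {P1 P2 : Finpartition s} (h : P1 = P2) {o1 : Option {A // A ∈ P1.parts}}
    {o2 : Option {A // A ∈ P2.parts}} (h2 : Option.map Subtype.val o1 = Option.map Subtype.val o2) :
    (⟨P1, o1⟩ : (P : Finpartition s) × Option {A // A ∈ P.parts}) = ⟨P2, o2⟩ := by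
  subst h
  have : o1 = o2 := Option.map_injective Subtype.val_injective h2
  rw [this]

lemma rest_addSingleton (ha : a ∉ s) (P : Finpartition s) :
    rest ha (addSingleton ha P) = P := by
  refine Finpartition.ext ?_
  ext c
  rw [mem_rest]
  constructor
  · rintro ⟨d, hd, hsub, rfl⟩
    rw [addSingleton_parts] at hd
    rcases Finset.mem_insert.1 hd with rfl | hd'
    · exact absurd (Finset.Subset.refl _) hsub
    · have had : a ∉ d := fun h => ha (P.le hd' h)
      rwa [Finset.erase_eq_of_notMem had]
  · intro hc
    have hac : a ∉ c := fun h => ha (P.le hc h)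
    refine ⟨c, ?_, ?_, Finset.erase_eq_of_notMem hac⟩
    · rw [addSingleton_parts]; exact Finset.mem_insert_of_mem hc
    · intro hsub
      obtain ⟨b, hb⟩ := P.nonempty_of_mem_parts hc
      exact hac ((Finset.mem_singleton.1 (hsub hb)) ▸ hb)

lemma part_addSingleton (ha : a ∉ s) (P : Finpartition s) :
    (addSingleton ha P).part a = {a} :=
  Finpartition.part_eq_of_mem _ (by rw [addSingleton_parts]; exact Finset.mem_insert_self _ _)
    (Finset.mem_singleton_self a)

lemma part_addToBlock (ha : a ∉ s) (P : Finpartition s) {A : Finset α} (hA : A ∈ P.parts) :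
    (addToBlock ha P hA).part a = insert a A :=
  Finpartition.part_eq_of_mem _ (by rw [addToBlock_parts]; exact Finset.mem_insert_self _ _)
    (Finset.mem_insert_self a A)

lemma rest_addToBlock (ha : a ∉ s) (P : Finpartition s) {A : Finset α} (hA : A ∈ P.parts) :
    rest ha (addToBlock ha P hA) = P := by
  have haA : a ∉ A := fun h => ha (P.le hA h)
  refine Finpartition.ext ?_
  ext c
  rw [mem_rest]
  constructor
  · rintro ⟨d, hd, hsub, rfl⟩
    rw [addToBlock_parts] at hd
    rcases Finset.mem_insert.1 hd with rfl | hd'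
    · rwa [Finset.erase_insert haA]
    · have hdP : d ∈ P.parts := Finset.mem_of_mem_erase hd'
      have had : a ∉ d := fun h => ha (P.le hdP h)
      rwa [Finset.erase_eq_of_notMem had]
  · intro hc
    by_cases hcA : c = A
    · subst hcA
      refine ⟨insert a c, ?_, ?_, Finset.erase_insert haA⟩
      · rw [addToBlock_parts]; exact Finset.mem_insert_self _ _
      · intro hsub
        obtain ⟨b, hb⟩ := P.nonempty_of_mem_parts hc
        have : b = a := Finset.mem_singleton.1 (hsub (Finset.mem_insert_of_mem hb))
        exact (fun h => ha (P.le hc h)) (this ▸ hb)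
    · have hac : a ∉ c := fun h => ha (P.le hc h)
      refine ⟨c, ?_, ?_, Finset.erase_eq_of_notMem hac⟩
      · rw [addToBlock_parts]
        exact Finset.mem_insert_of_mem (Finset.mem_erase.2 ⟨hcA, hc⟩)
      · exact fun hsub => by
          obtain ⟨b, hb⟩ := P.nonempty_of_mem_parts hc
          exact hac ((Finset.mem_singleton.1 (hsub hb)) ▸ hb)

lemma psi_phi (ha : a ∉ s) (j : (P : Finpartition s) × Option {A // A ∈ P.parts}) :
    psi ha (phi ha j) = j := by
  obtain ⟨P, o⟩ := j
  match o with
  | none =>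
      rw [phi, psi, dif_pos (part_addSingleton ha P)]
      exact sigma_eq (rest_addSingleton ha P) rfl
  | some ⟨A, hA⟩ =>
      have haA : a ∉ A := fun h => ha (P.le hA h)
      have hne : (addToBlock ha P hA).part a ≠ {a} := by
        rw [part_addToBlock ha P hA]
        intro h
        obtain ⟨b, hb⟩ := P.nonempty_of_mem_parts hA
        have : b = a := Finset.mem_singleton.1 (h ▸ Finset.mem_insert_of_mem hb)
        exact haA (this ▸ hb)
      rw [phi, psi, dif_neg hne]
      refine sigma_eq (rest_addToBlock ha P hA) ?_
      simp only [Option.map_some]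
      congr 1
      rw [part_addToBlock ha P hA, Finset.erase_insert haA]

lemma phi_psi (ha : a ∉ s) (Q : Finpartition (insert a s)) :
    phi ha (psi ha Q) = Q := by
  have haQ : a ∈ insert a s := Finset.mem_insert_self a s
  by_cases h : Q.part a = {a}
  · rw [psi, dif_pos h, phi]
    refine Finpartition.ext ?_
    rw [addSingleton_parts]
    ext c
    constructor
    · intro hc
      rcases Finset.mem_insert.1 hc with rfl | hc'
      · exact h ▸ (Q.part_mem.2 haQ)
      · rw [mem_rest] at hc'
        obtain ⟨d, hd, hsub, rfl⟩ := hc'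
        have had : a ∉ d := by
          intro hai
          exact hsub ((Finpartition.part_eq_of_mem Q hd hai) ▸ h ▸ Finset.Subset.refl _)
        rwa [Finset.erase_eq_of_notMem had]
    · intro hc
      by_cases hca : c = {a}
      · exact hca ▸ Finset.mem_insert_self _ _
      · have hac : a ∉ c := by
          intro hai
          exact hca ((Finpartition.part_eq_of_mem Q hc hai) ▸ h)
        refine Finset.mem_insert_of_mem ?_
        rw [mem_rest]
        exact ⟨c, hc, notsub_singleton hc hac, Finset.erase_eq_of_notMem hac⟩
  · rw [psi, dif_neg h, phi]
    refine Finpartition.ext ?_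
    rw [addToBlock_parts, Finset.insert_erase (Q.mem_part haQ)]
    ext c
    constructor
    · intro hc
      rcases Finset.mem_insert.1 hc with rfl | hc'
      · exact (Q.part_mem.2 haQ)
      · have hc'' := Finset.mem_of_mem_erase hc'
        rw [mem_rest] at hc''
        obtain ⟨d, hd, hsub, rfl⟩ := hc''
        have had : a ∉ d := by
          intro hai
          exact (Finset.ne_of_mem_erase hc')
            (by rw [Finpartition.part_eq_of_mem Q hd hai])
        rwa [Finset.erase_eq_of_notMem had]
    · intro hc
      by_cases hca : c = Q.part a
      · exact hca ▸ Finset.mem_insert_self _ _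
      · have hac : a ∉ c := by
          intro hai
          exact hca (Finpartition.part_eq_of_mem Q hc hai).symm
        refine Finset.mem_insert_of_mem (Finset.mem_erase.2 ⟨?_, ?_⟩)
        · intro hceq
          obtain ⟨b, hb⟩ := Q.nonempty_of_mem_parts hc
          have hbT : b ∈ Q.part a := Finset.mem_of_mem_erase (hceq ▸ hb)
          have hdisj : Disjoint c (Q.part a) := Q.disjoint hc ((Q.part_mem.2 haQ)) hca
          exact (Finset.disjoint_left.1 hdisj) hb hbT
        · rw [mem_rest]
          exact ⟨c, hc, notsub_singleton hc hac, Finset.erase_eq_of_notMem hac⟩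

end MPaux2

namespace MPaux2
open MPaux

variable {α : Type*} [DecidableEq α] {a : α} {s : Finset α}

lemma sum_finpartition_insert {M : Type*} [CommSemiring M] (ha : a ∉ s) (v : Finset α → M) :
    ∑ Q : Finpartition (insert a s), ∏ A ∈ Q.parts, v A
      = ∑ P : Finpartition s, (v {a} * ∏ A ∈ P.parts, v A
          + ∑ A ∈ P.parts, v (insert a A) * ∏ B ∈ P.parts.erase A, v B) := by
  have hbij : Function.Bijective (phi ha) :=
    Function.bijective_iff_has_inverse.2 ⟨psi ha, psi_phi ha, phi_psi ha⟩
  rw [← Fintype.sum_bijective (phi ha) hbij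
    (fun j => ∏ A ∈ (phi ha j).parts, v A) (fun Q => ∏ A ∈ Q.parts, v A) (fun _ => rfl)]
  rw [show (Finset.univ : Finset ((P : Finpartition s) × Option { A // A ∈ P.parts })) = Finset.univ.sigma (fun _ => Finset.univ) from rfl, Finset.sum_sigma]
  refine Finset.sum_congr rfl fun P _ => ?_
  rw [Fintype.sum_option]
  congr 1
  · rw [phi, addSingleton_parts, Finset.prod_insert
      (fun h => ha (P.le h (Finset.mem_singleton_self a)))]
  · rw [← Finset.sum_coe_sort (P.parts) (fun A => v (insert a A) * ∏ B ∈ P.parts.erase A, v B)]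
    refine Finset.sum_congr rfl fun b _ => ?_
    obtain ⟨A, hA⟩ := b
    rw [phi, addToBlock_parts, Finset.prod_insert
      (fun h => ha (P.le (Finset.mem_of_mem_erase h) (Finset.mem_insert_self a A)))]

end MPaux2

namespace MPaux3
open MPaux MPaux2
open scoped ContDiff

variable {n k : ℕ} (hk : k ≤ n)

/-- derivative along a finset of directions (coming from `Fin k`), in sorted order -/
noncomputable def DS (s : Finset (Fin k)) (F : (Fin n → ℝ) → ℝ) : (Fin n → ℝ) → ℝ :=
  mixedPartial ((s.sort (· ≤ ·)).map (Fin.castLE hk)) F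

lemma contDiff_DS {F : (Fin n → ℝ) → ℝ} (hF : ContDiff ℝ ∞ F) (s : Finset (Fin k)) :
    ContDiff ℝ ∞ (DS hk s F) :=
  contDiff_mixedPartial hF _

lemma DS_insert {a : Fin k} {s : Finset (Fin k)} (ha : a ∉ s) (F : (Fin n → ℝ) → ℝ)
    (hF : ContDiff ℝ ∞ F) :
    DS hk (insert a s) F = pd (Fin.castLE hk a) (DS hk s F) := by
  have hperm : ((insert a s).sort (· ≤ ·)).Perm (a :: s.sort (· ≤ ·)) :=
    ((Finset.sort_perm_toList _ _).trans (Finset.toList_insert ha)).trans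
      (List.Perm.cons a (Finset.sort_perm_toList _ _).symm)
  rw [DS, mixedPartial_perm (hperm.map (Fin.castLE hk)) F hF]
  rfl

lemma DS_singleton (a : Fin k) (F : (Fin n → ℝ) → ℝ) :
    DS hk {a} F = pd (Fin.castLE hk a) F := by
  rw [DS, Finset.sort_singleton]
  rfl

lemma pd_mul {F G : (Fin n → ℝ) → ℝ} (hF : ContDiff ℝ ∞ F) (hG : ContDiff ℝ ∞ G) (i : Fin n) :
    pd i (fun x => F x * G x) = fun x => F x * pd i G x + G x * pd i F x := by
  funext x
  rw [pd, fderiv_fun_mul ((hF.differentiable (by simp)) x)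
    ((hG.differentiable (by simp)) x)]
  simp [pd]

lemma pd_sum {ι : Type*} (t : Finset ι) (F : ι → (Fin n → ℝ) → ℝ)
    (hF : ∀ A ∈ t, ContDiff ℝ ∞ (F A)) (i : Fin n) :
    pd i (fun x => ∑ A ∈ t, F A x) = fun x => ∑ A ∈ t, pd i (F A) x := by
  funext x
  rw [pd, fderiv_fun_sum (fun A hA => (hF A hA).differentiable (by simp) x)]
  simp [pd]

lemma pd_prod {ι : Type*} [DecidableEq ι] (t : Finset ι) (F : ι → (Fin n → ℝ) → ℝ)
    (hF : ∀ A ∈ t, ContDiff ℝ ∞ (F A)) (i : Fin n) :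
    pd i (fun x => ∏ A ∈ t, F A x) =
      fun x => ∑ A ∈ t, (∏ B ∈ t.erase A, F B x) * pd i (F A) x := by
  funext x
  rw [pd, fderiv_finset_prod (fun A hA => (hF A hA).differentiable (by simp) x)]
  simp [pd]

end MPaux3

namespace MPaux3
open MPaux MPaux2
open scoped ContDiff

lemma key {n k : ℕ} (hk : k ≤ n) (f g : (Fin n → ℝ) → ℝ)
    (hf : ContDiff ℝ ∞ f) (hg : ContDiff ℝ ∞ g)
    (hfg : ∀ i : Fin n, pd i f = fun x => f x * pd i g x)
    (s : Finset (Fin k)) :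
    DS hk s f = fun x => f x * ∑ P : Finpartition s, ∏ A ∈ P.parts, DS hk A g x := by
  induction s using Finset.induction_on with
  | empty =>
      haveI : Unique (Finpartition (∅ : Finset (Fin k))) := by
        rw [← Finset.bot_eq_empty]; infer_instance
      funext x
      rw [Fintype.sum_unique]
      have hparts : (default : Finpartition (∅ : Finset (Fin k))).parts = ∅ :=
        Finpartition.parts_eq_empty_iff.2 Finset.bot_eq_empty.symm
      rw [hparts, Finset.prod_empty, mul_one]
      show mixedPartial ((Finset.sort (∅ : Finset (Fin k)) (· ≤ ·)).map (Fin.castLE hk)) f x = f x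
      rw [Finset.sort_empty]
      rfl
  | @insert a s ha ih =>
      have hDSg : ∀ A : Finset (Fin k), ContDiff ℝ ∞ (DS hk A g) := fun A => contDiff_DS hk hg A
      have hS : ContDiff ℝ ∞ (fun x => ∑ P : Finpartition s, ∏ A ∈ P.parts, DS hk A g x) :=
        ContDiff.sum (fun P _ => contDiff_prod (fun A _ => hDSg A))
      funext x
      rw [DS_insert hk ha f hf, ih]
      have hmul := congrFun (pd_mul (F := f)
        (G := fun x => ∑ P : Finpartition s, ∏ A ∈ P.parts, DS hk A g x) hf hS
        (Fin.castLE hk a)) x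
      rw [hmul]
      have hsum := congrFun (pd_sum (t := (Finset.univ : Finset (Finpartition s)))
        (F := fun P x => ∏ A ∈ P.parts, DS hk A g x)
        (fun P _ => contDiff_prod (fun A _ => hDSg A)) (Fin.castLE hk a)) x
      rw [hsum]
      have hprod : ∀ P : Finpartition s,
          pd (Fin.castLE hk a) (fun x => ∏ A ∈ P.parts, DS hk A g x) x
            = ∑ A ∈ P.parts, (∏ B ∈ P.parts.erase A, DS hk B g x) * DS hk (insert a A) g x := by
        intro P
        have h1 := congrFun (pd_prod P.parts (fun A => DS hk A g)
          (fun A _ => hDSg A) (Fin.castLE hk a)) x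
        rw [h1]
        refine Finset.sum_congr rfl fun A hA => ?_
        rw [DS_insert hk (fun h => ha (P.le hA h)) g hg]
      simp only [hprod]
      have hpf := congrFun (hfg (Fin.castLE hk a)) x
      rw [hpf]
      rw [sum_finpartition_insert ha (v := fun A => DS hk A g x), ← DS_singleton hk a g]
      rw [Finset.mul_sum, Finset.mul_sum, Finset.sum_mul, ← Finset.sum_add_distrib]
      refine Finset.sum_congr rfl fun P _ => ?_
      rw [mul_add, Finset.mul_sum, add_comm]
      congr 1
      · ring
      · rw [Finset.mul_sum]
        exact Finset.sum_congr rfl fun A _ => by ring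

end MPaux3

/-- For a smooth positive `f : ℝⁿ → ℝ` and `g = log f`, for each `k ≤ n`,
`∂₁⋯∂ₖ f = f · Σ_{I ∈ Π_k} ∂_I g`, the sum running over all set partitions `I` of
`{1,…,k}` into nonempty blocks, where `∂_I g = ∏_{A ∈ I} (∏_{i ∈ A} ∂_i) g`. -/
theorem mixedPartial_eq_mul_sum_partitions
    {n k : ℕ} (hk : k ≤ n) (f : (Fin n → ℝ) → ℝ)
    (hf : ContDiff ℝ (⊤ : ℕ∞) f) (hpos : ∀ x, 0 < f x)
    (g : (Fin n → ℝ) → ℝ) (hg : g = fun x => Real.log (f x))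
    (x : Fin n → ℝ) :
    mixedPartial ((List.finRange k).map (Fin.castLE hk)) f x
      = f x * ∑ I : Finpartition (Finset.univ : Finset (Fin k)),
          ∏ A ∈ I.parts,
            mixedPartial (A.sort (· ≤ ·) |>.map (Fin.castLE hk)) g x := by
  have hf' : ContDiff ℝ ∞ f := hf.of_le (by simp)
  have hgs : ContDiff ℝ ∞ g := by
    rw [hg]; exact hf'.log (fun y => (hpos y).ne')
  have hfe : f = fun y => Real.exp (g y) := by
    funext y; rw [hg]; exact (Real.exp_log (hpos y)).symm
  have hfg : ∀ i : Fin n, MPaux.pd i f = fun y => f y * MPaux.pd i g y := by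
    intro i
    funext y
    have hdg : HasFDerivAt g (fderiv ℝ g y) y :=
      ((hgs.differentiable (by simp)) y).hasFDerivAt
    have he := hdg.exp
    rw [MPaux.pd]
    conv_lhs => rw [hfe]
    rw [he.fderiv]
    simp [MPaux.pd, hfe]
  have h := congrFun (MPaux3.key hk f g hf' hgs hfg Finset.univ) x
  have hsort : (Finset.univ.sort (· ≤ ·) : List (Fin k)) = List.finRange k :=
    Fin.sort_univ k
  rw [← hsort]
  exact h
end

section
/- Let n ≥ 1 and let a_j^i (1 ≤ j ≤ m, 1 ≤ i ≤ n) be real numbers with Σ_{j=1}^m a_j^i = 3 for every i. Define f(h₁,…,h_n) = [∏_{i=1}^n (1+h_i)²] / [∏_{j=1}^m (1 + Σ_i a_j^i h_i)]. Then the mixed partial derivative ∂₁⋯∂_n f evaluated at h = 0 equals (-1)^n Σ_{I ∈ Π_n} ε_I ∏_{A ∈ I, |A| ≥ 2} (Σ_{j=1}^m ∏_{i∈A} a_j^i), where ε_I = ∏_{A∈I} (|A|-1)! and Π_n is the set of set partitions of {1,…,n}. -/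
open scoped BigOperators

/-!
Write `f = ∏_κ (1 + c_κ ⬝ᵥ h) ^ w_κ`: the numerator contributes the forms `c = eᵢ` with
weight `2`, the denominator the forms `a j` with weight `-1`. With `D_A := ∂_A log f`, one has
`∂_k f = f · D_{k}` and `∂_k D_A = D_{A ∪ {k}}` for `k ∉ A`, where explicitly
`∂_A log (1 + c ⬝ᵥ h) = (-1)^(|A|+1) (|A|-1)! ∏_{i ∈ A} c i · (1 + c ⬝ᵥ h)^(-|A|)`.
Since a partition of `insert k s` comes from a partition of `s` either by adding the part `{k}`
or by inserting `k` into one of its parts, induction on the number of derivatives gives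
`∂_S f = f · Σ_{π ∈ Π(S)} ∏_{A ∈ π} D_A`. At `h = 0` we have `f = 1` and
`D_A(0) = (-1)^(|A|+1) (|A|-1)! Σ_κ w_κ ∏_{i ∈ A} c_κ i`; as `Σ_j a j i = 3`, this is `-1` on
singletons and `(-1)^|A| (|A|-1)! Σ_j ∏_{i ∈ A} a j i` on larger blocks.
-/

open Finset
open scoped Nat

namespace Finpartition

variable {α : Type*} [DecidableEq α] {s : Finset α} {k : α}

theorem notMem_of_mem_parts (hk : k ∉ s) (P : Finpartition s) {A : Finset α}
    (hA : A ∈ P.parts) : k ∉ A :=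
  fun h => hk (P.le hA h)

def addSingleton (hk : k ∉ s) (P : Finpartition s) : Finpartition (insert k s) :=
  P.extend (singleton_ne_empty k) (disjoint_singleton_right.2 hk)
    (by rw [sup_eq_union, union_comm, ← insert_eq])

@[simp]
theorem addSingleton_parts (hk : k ∉ s) (P : Finpartition s) :
    (P.addSingleton hk).parts = insert {k} P.parts := rfl

def insertIntoPart (hk : k ∉ s) (P : Finpartition s) {A : Finset α} (hA : A ∈ P.parts) :
    Finpartition (insert k s) where
  parts := insert (insert k A) (P.parts.erase A)
  supIndep := by
    rw [supIndep_iff_pairwiseDisjoint, coe_insert]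
    refine (P.disjoint.subset (coe_subset.2 (erase_subset _ _))).insert fun B hB _ => ?_
    obtain ⟨hBA, hB⟩ := mem_erase.1 hB
    exact disjoint_insert_left.2 ⟨P.notMem_of_mem_parts hk hB, P.disjoint hA hB hBA.symm⟩
  sup_parts := by
    have h := P.sup_parts
    rw [← insert_erase hA, sup_insert] at h
    simp only [sup_insert, id] at h ⊢
    rw [sup_eq_union, insert_union, ← sup_eq_union, h]
  bot_notMem := by
    simp only [bot_eq_empty, mem_insert, mem_erase, not_or]
    exact ⟨(insert_ne_empty k A).symm, fun h => P.bot_notMem h.2⟩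

@[simp]
theorem insertIntoPart_parts (hk : k ∉ s) (P : Finpartition s) {A : Finset α}
    (hA : A ∈ P.parts) :
    (P.insertIntoPart hk hA).parts = insert (insert k A) (P.parts.erase A) := rfl

def extendInsert (hk : k ∉ s) :
    (Σ P : Finpartition s, Option P.parts) → Finpartition (insert k s)
  | ⟨P, none⟩ => P.addSingleton hk
  | ⟨P, some A⟩ => P.insertIntoPart hk A.2

theorem restrict_extendInsert_parts (hk : k ∉ s) (x : Σ P : Finpartition s, Option P.parts) :
    ((extendInsert hk x).restrict (subset_insert k s)).parts = x.1.parts := by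
  have hid : ∀ P : Finpartition s, ∀ B ∈ P.parts, B ∩ s = B := fun P B hB =>
    inter_eq_left.2 (P.le hB)
  obtain ⟨P, _ | ⟨A, hA⟩⟩ := x
  · simp [extendInsert, restrict, image_congr (hid P), hk]
  · have hA' : insert k A ∩ s = A := by rw [insert_inter_of_notMem hk, hid P A hA]
    have himg : (P.parts.erase A).image (· ∩ s) = P.parts.erase A := by
      rw [image_congr fun B hB => hid P B (mem_of_mem_erase hB), image_id']
    simp [extendInsert, restrict, hA', himg, insert_erase hA]

theorem part_extendInsert_none (hk : k ∉ s) (P : Finpartition s) :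
    (extendInsert hk ⟨P, none⟩).part k = {k} :=
  part_eq_of_mem _ (mem_insert_self _ _) (mem_singleton_self k)

theorem part_extendInsert_some (hk : k ∉ s) (P : Finpartition s) (A : P.parts) :
    (extendInsert hk ⟨P, some A⟩).part k = insert k A.1 :=
  part_eq_of_mem _ (mem_insert_self _ _) (mem_insert_self k _)

theorem extendInsert_injective (hk : k ∉ s) : Function.Injective (extendInsert hk) := by
  rintro ⟨P, o⟩ ⟨P', o'⟩ h
  obtain rfl : P = P' := Finpartition.ext <| by
    simpa only [restrict_extendInsert_parts] using
      congrArg (fun ρ => (ρ.restrict (subset_insert k s)).parts) h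
  have hpart := congrArg (·.part k) h
  have hne : ∀ A : P.parts, insert k A.1 ≠ {k} := fun A hA => by
    obtain ⟨a, ha⟩ := P.nonempty_of_mem_parts A.2
    have : a = k := mem_singleton.1 (hA ▸ mem_insert_of_mem ha)
    exact P.notMem_of_mem_parts hk A.2 (this ▸ ha)
  rcases o with _ | A <;> rcases o' with _ | A'
  · rfl
  · exact absurd (by simpa [part_extendInsert_none, part_extendInsert_some] using hpart)
      (hne A').symm
  · exact absurd (by simpa [part_extendInsert_none, part_extendInsert_some] using hpart) (hne A)
  · have h : insert k A.1 = insert k A'.1 := by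
      simpa [part_extendInsert_some] using hpart
    have hAA' : A = A' := Subtype.ext <| by
      rw [← erase_insert (P.notMem_of_mem_parts hk A.2), h,
        erase_insert (P.notMem_of_mem_parts hk A'.2)]
    rw [hAA']

theorem restrict_insert_parts (hk : k ∉ s) (ρ : Finpartition (insert k s)) :
    (ρ.restrict (subset_insert k s)).parts =
      (insert ((ρ.part k).erase k) (ρ.parts.erase (ρ.part k))).erase ∅ := by
  have hC : ρ.part k ∈ ρ.parts := ρ.part_mem.2 (mem_insert_self k s)
  have hinter : ∀ B ∈ ρ.parts, B ∩ s = B.erase k := fun B hB => by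
    ext a
    simp only [mem_inter, mem_erase]
    exact ⟨fun ⟨haB, has⟩ => ⟨fun h => hk (h ▸ has), haB⟩,
      fun ⟨hak, haB⟩ => ⟨haB, (mem_insert.1 (ρ.le hB haB)).resolve_left hak⟩⟩
  have hid : ∀ B ∈ ρ.parts.erase (ρ.part k), B ∩ s = B := fun B hB => by
    obtain ⟨hBC, hB⟩ := mem_erase.1 hB
    rw [hinter B hB, erase_eq_of_notMem fun hkB => hBC (ρ.part_eq_of_mem hB hkB).symm]
  have himage :
      ρ.parts.image (· ∩ s) = insert ((ρ.part k).erase k) (ρ.parts.erase (ρ.part k)) := by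
    conv_lhs => rw [← insert_erase hC]
    rw [image_insert, image_congr hid, image_id', hinter _ hC]
  exact congrArg (·.erase ∅) himage

theorem extendInsert_surjective (hk : k ∉ s) : Function.Surjective (extendInsert hk) := by
  intro ρ
  set C := ρ.part k
  have hC : C ∈ ρ.parts := ρ.part_mem.2 (mem_insert_self k s)
  have hkC : k ∈ C := ρ.mem_part (mem_insert_self k s)
  have hX : ∅ ∉ ρ.parts.erase C := fun h => ρ.bot_notMem (mem_of_mem_erase h)
  set P := ρ.restrict (subset_insert k s)
  have hP : P.parts = (insert (C.erase k) (ρ.parts.erase C)).erase ∅ :=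
    restrict_insert_parts hk ρ
  by_cases hCk : C.erase k = ∅
  · refine ⟨⟨P, none⟩, Finpartition.ext ?_⟩
    have : C = {k} := by rw [← insert_erase hkC, hCk]; rfl
    rw [extendInsert, addSingleton_parts, hP, hCk, erase_insert_eq_erase,
      erase_eq_of_notMem hX, ← this, insert_erase hC]
  · have hA : C.erase k ∈ P.parts := by
      rw [hP]
      exact mem_erase.2 ⟨hCk, mem_insert_self _ _⟩
    refine ⟨⟨P, some ⟨_, hA⟩⟩, Finpartition.ext ?_⟩
    have hAX : C.erase k ∉ ρ.parts.erase C := fun h => by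
      obtain ⟨a, ha⟩ := nonempty_iff_ne_empty.2 hCk
      exact (mem_erase.1 h).1
        (ρ.eq_of_mem_parts (mem_of_mem_erase h) hC ha (mem_of_mem_erase ha))
    have h0 : ∅ ∉ insert (C.erase k) (ρ.parts.erase C) := by simp [hX, Ne.symm hCk]
    show insert (insert k (C.erase k)) (P.parts.erase (C.erase k)) = ρ.parts
    rw [hP, erase_eq_of_notMem h0, erase_insert hAX, insert_erase hkC, insert_erase hC]

theorem sum_prod_parts_insert {R : Type*} [CommSemiring R] (hk : k ∉ s) (F : Finset α → R) :
    ∑ ρ : Finpartition (insert k s), ∏ B ∈ ρ.parts, F B =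
      ∑ P : Finpartition s, (F {k} * ∏ B ∈ P.parts, F B +
        ∑ A ∈ P.parts, F (insert k A) * ∏ B ∈ P.parts.erase A, F B) := by
  rw [← Fintype.sum_bijective _ ⟨extendInsert_injective hk, extendInsert_surjective hk⟩
    (fun x => ∏ B ∈ (extendInsert hk x).parts, F B) _ fun _ => rfl, Fintype.sum_sigma]
  refine sum_congr rfl fun P _ => ?_
  have hsingleton : {k} ∉ P.parts := fun h =>
    P.notMem_of_mem_parts hk h (mem_singleton_self k)
  rw [Fintype.sum_option, ← sum_coe_sort P.parts]
  simp only [extendInsert, addSingleton_parts, insertIntoPart_parts, prod_insert hsingleton]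
  congr 1
  refine sum_congr rfl fun A _ => prod_insert fun h => ?_
  exact P.notMem_of_mem_parts hk (mem_of_mem_erase h) (mem_insert_self k A)

end Finpartition

section AffineProd

variable {ι κ : Type*} [Fintype ι] {x : ι → ℝ}

/-- `∂_A log (1 + c ⬝ᵥ h)`, for a nonempty set `A` of coordinates. -/
noncomputable def affineFactorLogPartial (c : ι → ℝ) (A : Finset ι) (h : ι → ℝ) : ℝ :=
  (-1) ^ (#A + 1) * (#A - 1)! * (∏ i ∈ A, c i) * (1 + c ⬝ᵥ h) ^ (-(#A : ℤ))

noncomputable def affineProd [Fintype κ] (c : κ → ι → ℝ) (w : κ → ℤ) (h : ι → ℝ) : ℝ :=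
  ∏ j, (1 + c j ⬝ᵥ h) ^ w j

/-- `∂_A log (affineProd c w)`. -/
noncomputable def affineProdLogPartial [Fintype κ] (c : κ → ι → ℝ) (w : κ → ℤ) (A : Finset ι)
    (h : ι → ℝ) : ℝ :=
  ∑ j, w j * affineFactorLogPartial (c j) A h

def affineProdDomain (c : κ → ι → ℝ) : Set (ι → ℝ) := {h | ∀ j, 1 + c j ⬝ᵥ h ≠ 0}

theorem isOpen_affineProdDomain [Finite κ] (c : κ → ι → ℝ) : IsOpen (affineProdDomain c) := by
  simp only [affineProdDomain, Set.ofPred_forall]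
  exact isOpen_iInter_of_finite fun j => isOpen_ne_fun (by fun_prop) continuous_const

theorem zero_mem_affineProdDomain (c : κ → ι → ℝ) : 0 ∈ affineProdDomain c := by
  simp [affineProdDomain]

variable [Fintype κ] {c : κ → ι → ℝ} (w : κ → ℤ)

theorem affineProd_zero : affineProd c w 0 = 1 := by
  simp [affineProd]

theorem affineProdLogPartial_zero (A : Finset ι) :
    affineProdLogPartial c w A 0 =
      (-1) ^ (#A + 1) * (#A - 1)! * ∑ j, w j * ∏ i ∈ A, c j i := by
  simp only [affineProdLogPartial, affineFactorLogPartial, mul_sum]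
  refine sum_congr rfl fun j _ => ?_
  simp
  ring

variable [DecidableEq ι]

theorem hasFDerivAt_one_add_dotProduct_zpow (c : ι → ℝ) (p : ℤ) (hx : 1 + c ⬝ᵥ x ≠ 0) :
    HasFDerivAt (fun h => (1 + c ⬝ᵥ h) ^ p)
      (((p : ℝ) * (1 + c ⬝ᵥ x) ^ (p - 1)) •
        LinearMap.toContinuousLinearMap (dotProductEquiv ℝ ι c)) x :=
  (hasDerivAt_zpow p _ (.inl hx)).comp_hasFDerivAt (f := fun h => 1 + c ⬝ᵥ h) x
    ((LinearMap.toContinuousLinearMap (dotProductEquiv ℝ ι c)).hasFDerivAt.const_add 1)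

theorem differentiableAt_affineFactorLogPartial (c : ι → ℝ) (A : Finset ι)
    (hx : 1 + c ⬝ᵥ x ≠ 0) : DifferentiableAt ℝ (affineFactorLogPartial c A) x :=
  (hasFDerivAt_one_add_dotProduct_zpow c _ hx).differentiableAt.const_mul _

theorem fderiv_affineFactorLogPartial_single (c : ι → ℝ) {A : Finset ι} (hA : A.Nonempty)
    {k : ι} (hk : k ∉ A) (hx : 1 + c ⬝ᵥ x ≠ 0) :
    fderiv ℝ (affineFactorLogPartial c A) x (Pi.single k 1) =
      affineFactorLogPartial c (insert k A) x := by
  have hderiv : HasFDerivAt (affineFactorLogPartial c A) _ x :=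
    (hasFDerivAt_one_add_dotProduct_zpow c _ hx).const_mul _
  have hfac : ((#A)! : ℝ) = #A * (#A - 1)! := by
    exact_mod_cast (Nat.mul_factorial_pred (card_pos.2 hA).ne').symm
  have hexp : -(#A : ℤ) - 1 = -((#A + 1 : ℕ) : ℤ) := by push_cast; ring
  simp only [hderiv.fderiv, _root_.smul_apply, smul_eq_mul, affineFactorLogPartial,
    card_insert_of_notMem hk, prod_insert hk, Nat.add_sub_cancel, hexp, hfac,
    LinearMap.coe_toContinuousLinearMap', dotProductEquiv_apply_apply, dotProduct_single_one]
  push_cast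
  ring

theorem differentiableAt_affineProdLogPartial (A : Finset ι) (hx : x ∈ affineProdDomain c) :
    DifferentiableAt ℝ (affineProdLogPartial c w A) x :=
  DifferentiableAt.fun_sum fun j _ =>
    (differentiableAt_affineFactorLogPartial _ A (hx j)).const_mul _

theorem fderiv_affineProdLogPartial_single {A : Finset ι} (hA : A.Nonempty) {k : ι}
    (hk : k ∉ A) (hx : x ∈ affineProdDomain c) :
    fderiv ℝ (affineProdLogPartial c w A) x (Pi.single k 1) =
      affineProdLogPartial c w (insert k A) x := by
  unfold affineProdLogPartial
  rw [fderiv_fun_sum fun j _ =>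
    (differentiableAt_affineFactorLogPartial _ A (hx j)).const_mul _, _root_.sum_apply]
  refine sum_congr rfl fun j _ => ?_
  rw [fderiv_const_mul (differentiableAt_affineFactorLogPartial _ A (hx j)),
    _root_.smul_apply, smul_eq_mul, fderiv_affineFactorLogPartial_single _ hA hk (hx j)]

theorem differentiableAt_affineProd (hx : x ∈ affineProdDomain c) :
    DifferentiableAt ℝ (affineProd c w) x := by
  classical
  exact (HasFDerivAt.finsetProd fun j _ =>
    hasFDerivAt_one_add_dotProduct_zpow _ _ (hx j)).differentiableAt

theorem fderiv_affineProd_single (hx : x ∈ affineProdDomain c) (k : ι) :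
    fderiv ℝ (affineProd c w) x (Pi.single k 1) =
      affineProd c w x * affineProdLogPartial c w {k} x := by
  classical
  have hderiv : HasFDerivAt (affineProd c w) _ x :=
    HasFDerivAt.finsetProd fun j _ => hasFDerivAt_one_add_dotProduct_zpow _ _ (hx j)
  rw [hderiv.fderiv, affineProdLogPartial, mul_sum, _root_.sum_apply]
  refine sum_congr rfl fun j _ => ?_
  rw [affineProd, ← prod_erase_mul _ _ (mem_univ j), zpow_sub₀ (hx j), zpow_one]
  simp [affineFactorLogPartial]
  ring

end AffineProd

theorem mixedPartial_eq_mul_sum_prod_parts {n : ℕ} {U : Set (Fin n → ℝ)} (hU : IsOpen U)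
    {F : (Fin n → ℝ) → ℝ} {D : Finset (Fin n) → (Fin n → ℝ) → ℝ}
    (hF : ∀ x ∈ U, DifferentiableAt ℝ F x)
    (hF' : ∀ x ∈ U, ∀ k, fderiv ℝ F x (Pi.single k 1) = F x * D {k} x)
    (hD : ∀ A, ∀ x ∈ U, DifferentiableAt ℝ (D A) x)
    (hD' : ∀ A : Finset (Fin n), A.Nonempty → ∀ k ∉ A, ∀ x ∈ U,
      fderiv ℝ (D A) x (Pi.single k 1) = D (insert k A) x)
    {l : List (Fin n)} (hl : l.Nodup) {x : Fin n → ℝ} (hx : x ∈ U) :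
    mixedPartial l F x = F x * ∑ P : Finpartition l.toFinset, ∏ A ∈ P.parts, D A x := by
  induction l generalizing x with
  | nil =>
    have : Unique (Finpartition (∅ : Finset (Fin n))) :=
      inferInstanceAs (Unique (Finpartition (⊥ : Finset (Fin n))))
    rw [List.toFinset_nil, Fintype.sum_unique, Finpartition.parts_eq_empty_iff.2 rfl, prod_empty,
      mul_one]
    rfl
  | cons k l ih =>
    obtain ⟨hkl, hl⟩ := List.nodup_cons.1 hl
    have hk : k ∉ l.toFinset := fun h => hkl (List.mem_toFinset.1 h)
    have hdiffProd : ∀ P : Finpartition l.toFinset, ∀ y ∈ U,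
        DifferentiableAt ℝ (fun y => ∏ A ∈ P.parts, D A y) y := fun P y hy =>
      (HasFDerivAt.finsetProd fun A _ => (hD A y hy).hasFDerivAt).differentiableAt
    have hderivProd : ∀ P : Finpartition l.toFinset,
        fderiv ℝ (fun y => ∏ A ∈ P.parts, D A y) x (Pi.single k 1) =
          ∑ A ∈ P.parts, D (insert k A) x * ∏ B ∈ P.parts.erase A, D B x := fun P => by
      rw [fderiv_finsetProd fun A _ => hD A x hx, _root_.sum_apply]
      refine sum_congr rfl fun A hA => ?_
      rw [_root_.smul_apply, smul_eq_mul, hD' A (P.nonempty_of_mem_parts hA) k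
        (fun h => hk (P.le hA h)) x hx, mul_comm]
    have heq : mixedPartial l F =ᶠ[nhds x]
        fun y => F y * ∑ P : Finpartition l.toFinset, ∏ A ∈ P.parts, D A y :=
      Filter.eventuallyEq_of_mem (hU.mem_nhds hx) fun y hy => ih hl hy
    show fderiv ℝ (mixedPartial l F) x (Pi.single k 1) = _
    rw [heq.fderiv_eq, fderiv_fun_mul (hF x hx)
      (DifferentiableAt.fun_sum fun P _ => hdiffProd P x hx),
      fderiv_fun_sum fun P _ => hdiffProd P x hx]
    simp only [_root_.add_apply, _root_.smul_apply, _root_.sum_apply, smul_eq_mul, hderivProd,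
      hF' x hx]
    rw [List.toFinset_cons, Finpartition.sum_prod_parts_insert hk, sum_add_distrib, ← mul_sum]
    ring

theorem mixedPartial_affineProd_zero {κ : Type*} [Fintype κ] {n : ℕ} (c : κ → Fin n → ℝ)
    (w : κ → ℤ) :
    mixedPartial (List.finRange n) (affineProd c w) 0 =
      ∑ P : Finpartition (univ : Finset (Fin n)),
        ∏ A ∈ P.parts, (-1) ^ (#A + 1) * (#A - 1)! * ∑ j, w j * ∏ i ∈ A, c j i := by
  rw [mixedPartial_eq_mul_sum_prod_parts (isOpen_affineProdDomain c)
    (fun x hx => differentiableAt_affineProd w hx)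
    (fun x hx => fderiv_affineProd_single w hx)
    (fun A x hx => differentiableAt_affineProdLogPartial w A hx)
    (fun A hA k hk x hx => fderiv_affineProdLogPartial_single w hA hk hx)
    (List.nodup_finRange n) (zero_mem_affineProdDomain c), List.toFinset_finRange,
    affineProd_zero, one_mul]
  simp only [affineProdLogPartial_zero]

section Ratio

variable {ι : Type*} [Fintype ι] [DecidableEq ι] {m : ℕ}

def ratioForms (a : Fin m → ι → ℝ) : ι ⊕ Fin m → ι → ℝ :=
  Sum.elim (fun i => Pi.single i 1) a

def ratioExponents : ι ⊕ Fin m → ℤ :=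
  Sum.elim (fun _ => 2) (fun _ => -1)

theorem affineProd_ratio (a : Fin m → ι → ℝ) :
    affineProd (ratioForms a) ratioExponents =
      fun h => (∏ i, (1 + h i) ^ 2) / ∏ j, (1 + ∑ i, a j i * h i) := by
  funext h
  simp only [affineProd, ratioForms, ratioExponents, Fintype.prod_sum_type, Sum.elim_inl,
    Sum.elim_inr, single_dotProduct, one_mul, zpow_ofNat, zpow_neg_one, prod_inv_distrib,
    div_eq_mul_inv]
  rfl

theorem sum_ratioExponents_mul_prod_ratioForms (a : Fin m → ι → ℝ) (ha : ∀ i, ∑ j, a j i = 3)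
    {A : Finset ι} (hA : A.Nonempty) :
    ∑ j, (ratioExponents j : ℝ) * ∏ i ∈ A, ratioForms a j i =
      -(if 2 ≤ #A then ∑ j, ∏ i ∈ A, a j i else 1) := by
  simp only [Fintype.sum_sum_type, ratioForms, ratioExponents, Sum.elim_inl, Sum.elim_inr]
  split_ifs with h2
  · have hzero : ∀ i, ∏ i' ∈ A, (Pi.single i 1 : ι → ℝ) i' = 0 := fun i => by
      obtain ⟨i', hi', hne⟩ := (one_lt_card_iff_nontrivial.1 h2).exists_ne i
      exact prod_eq_zero hi' (Pi.single_eq_of_ne hne 1)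
    simp [hzero]
  · obtain ⟨i, rfl⟩ := card_eq_one.1 (show #A = 1 by have := hA.card_pos; omega)
    simp [Pi.single_apply, ha]
    norm_num

end Ratio

theorem mixedPartial_ratio_at_zero_general
    {n m : ℕ} (a : Fin m → Fin n → ℝ)
    (ha : ∀ i, ∑ j, a j i = 3)
    (f : (Fin n → ℝ) → ℝ)
    (hf : f = fun h => (∏ i, (1 + h i) ^ 2) / ∏ j, (1 + ∑ i, a j i * h i)) :
    mixedPartial (List.finRange n) f 0
      = (-1 : ℝ) ^ n *
          ∑ I : Finpartition (Finset.univ : Finset (Fin n)),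
            (∏ A ∈ I.parts, ((Nat.factorial (A.card - 1)) : ℝ)) *
              ∏ A ∈ I.parts.filter (fun A => 2 ≤ A.card),
                (∑ j, ∏ i ∈ A, a j i) := by
  rw [hf, ← affineProd_ratio, mixedPartial_affineProd_zero, mul_sum]
  refine sum_congr rfl fun P _ => ?_
  have hblock : ∀ A ∈ P.parts, (-1) ^ (#A + 1) * ((#A - 1)! : ℝ) *
      ∑ j, (ratioExponents j : ℝ) * ∏ i ∈ A, ratioForms a j i =
        (-1) ^ #A * (#A - 1)! * (if 2 ≤ #A then ∑ j, ∏ i ∈ A, a j i else 1) := fun A hA => by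
    rw [sum_ratioExponents_mul_prod_ratioForms a ha (P.nonempty_of_mem_parts hA)]
    ring
  rw [prod_congr rfl hblock, prod_mul_distrib, prod_mul_distrib, prod_pow_eq_pow_sum,
    P.sum_card_parts, card_univ, Fintype.card_fin, ← prod_filter, mul_assoc]

/-- Let `a j i` (for `j < m`, `i < n`) be reals with `Σ_j a j i = 3` for every `i`, and
`f(h) = ∏ᵢ (1+hᵢ)² / ∏ⱼ (1 + Σᵢ a j i · hᵢ)`.  Then
`∂₁⋯∂_n f |_{h=0} = (−1)ⁿ Σ_{I ∈ Π_n} ε_I ∏_{A ∈ I, |A| ≥ 2} (Σⱼ ∏_{i∈A} a j i)`,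
where `ε_I = ∏_{A ∈ I} (|A|−1)!`. -/
theorem mixedPartial_ratio_at_zero
    {n m : ℕ} (hn : 1 ≤ n) (a : Fin m → Fin n → ℝ)
    (ha : ∀ i, ∑ j, a j i = 3)
    (f : (Fin n → ℝ) → ℝ)
    (hf : f = fun h => (∏ i, (1 + h i) ^ 2) / ∏ j, (1 + ∑ i, a j i * h i)) :
    mixedPartial (List.finRange n) f 0
      = (-1 : ℝ) ^ n *
          ∑ I : Finpartition (Finset.univ : Finset (Fin n)),
            (∏ A ∈ I.parts, ((Nat.factorial (A.card - 1)) : ℝ)) *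
              ∏ A ∈ I.parts.filter (fun A => 2 ≤ A.card),
                (∑ j, ∏ i ∈ A, a j i) :=
  mixedPartial_ratio_at_zero_general a ha f hf
end

section
/- Let f(h) = (1+h)^{n+1} / ∏_{i=1}^m (1 + l_i h) with l_i real. Then f^{(n)}(0) = n! Σ_π ∏_{t∈π} [(-1)^{t-1}(n+1-s_t)] / [m(t,π)! · t], where the sum runs over unordered partitions π of the integer n, m(t,π) is the multiplicity of the part t in π, and s_t = Σ_i l_i^t. -/
/-!
The logarithmic derivative of `f` is `g h = (n + 1) / (1 + h) - ∑ i, lᵢ / (1 + lᵢ h)`, whose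
`r`-th derivative at `0` is `(-1)^r r! (n + 1 - s_{r+1}) = (r + 1)! a_{r+1}` with
`a_t = (-1)^(t-1) (n + 1 - s_t) / t`. Leibniz's rule applied to `f' = f g` then gives
`f^{(k+1)}(0) = ∑_j C(k, j) f^{(j)}(0) g^{(k-j)}(0)`. The partition sum
`E_k = ∑_π ∏_t a_t^{m_t} / m_t!` satisfies `k E_k = ∑_t t a_t E_{k-t}`: write `k = ∑_t m_t t`
and remove one part `t` from each partition. So `k! E_k` obeys the same recurrence as
`f^{(k)}(0)`, with the same initial value `1`.
-/

open Finset Filter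
open scoped Topology ContDiff Nat

namespace Nat.Partition

variable {K : Type*} [Field K]

noncomputable def partWeight (a : ℕ → K) (p : Multiset ℕ) : K :=
  ∏ t ∈ p.toFinset, a t ^ p.count t / (p.count t)!

/-- The coefficient of `X ^ k` in `exp (∑_{t ≥ 1} a t * X ^ t)`. -/
noncomputable def expCoeff (a : ℕ → K) (k : ℕ) : K :=
  ∑ π : k.Partition, partWeight a π.parts

lemma partWeight_eq_prod_of_subset (a : ℕ → K) {p : Multiset ℕ} {s : Finset ℕ}
    (hs : p.toFinset ⊆ s) : partWeight a p = ∏ t ∈ s, a t ^ p.count t / (p.count t)! :=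
  prod_subset hs fun t _ ht => by simp [Multiset.count_eq_zero_of_notMem (by simpa using ht)]

variable [CharZero K]

lemma count_mul_partWeight_cons (a : ℕ → K) (p : Multiset ℕ) (t : ℕ) :
    ((t ::ₘ p).count t : K) * partWeight a (t ::ₘ p) = a t * partWeight a p := by
  classical
  set s := insert t p.toFinset
  have ht : t ∈ s := mem_insert_self t _
  rw [partWeight_eq_prod_of_subset a (s := s) (by simp [s, Multiset.toFinset_cons]),
    partWeight_eq_prod_of_subset a (subset_insert t _), ← mul_prod_erase s _ ht,
    ← mul_prod_erase s _ ht, Multiset.count_cons_self]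
  have hrest : ∏ u ∈ s.erase t, a u ^ (t ::ₘ p).count u / ((t ::ₘ p).count u)!
      = ∏ u ∈ s.erase t, a u ^ p.count u / (p.count u)! :=
    prod_congr rfl fun u hu => by rw [Multiset.count_cons_of_ne (ne_of_mem_erase hu)]
  rw [hrest, Nat.factorial_succ, pow_succ]
  push_cast
  field_simp

lemma sum_count_mul_partWeight (a : ℕ → K) {k t : ℕ} (ht : 1 ≤ t) (htk : t ≤ k) :
    ∑ π : k.Partition, (π.parts.count t : K) * partWeight a π.parts
      = a t * expCoeff a (k - t) := by
  classical
  rw [← Fintype.sum_subtype_add_sum_subtype (fun π : k.Partition => t ∈ π.parts),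
    Fintype.sum_eq_zero (fun π : {π : k.Partition // ¬ t ∈ π.parts} => _)
      fun π => by simp [Multiset.count_eq_zero_of_notMem π.2], add_zero, expCoeff, mul_sum,
    ← (partitionWithPartEquiv ht htk).symm.sum_comp]
  refine sum_congr rfl fun q _ => ?_
  rw [partitionWithPartEquiv_symm_apply_parts, count_mul_partWeight_cons]

lemma sum_count_mul_self_eq {k : ℕ} (π : k.Partition) :
    ∑ t ∈ range (k + 1), π.parts.count t * t = k := by
  classical
  have hsub : π.parts.toFinset ⊆ range (k + 1) := fun t ht =>
    mem_range.2 (Nat.lt_succ_of_le (π.le_of_mem_parts (Multiset.mem_toFinset.1 ht)))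
  have h := sum_multiset_count_of_subset π.parts _ hsub
  rw [π.parts_sum] at h
  simpa only [smul_eq_mul] using h.symm

lemma cast_mul_expCoeff (a : ℕ → K) (k : ℕ) :
    (k : K) * expCoeff a k = ∑ p ∈ antidiagonal k, (p.2 : K) * a p.2 * expCoeff a p.1 := by
  calc (k : K) * expCoeff a k
      = ∑ t ∈ range (k + 1), (t : K) * ∑ π : k.Partition,
          (π.parts.count t : K) * partWeight a π.parts := by
        simp_rw [expCoeff, mul_sum, sum_comm (s := range (k + 1))]
        refine sum_congr rfl fun π _ => ?_
        conv_lhs => arg 1; rw [← sum_count_mul_self_eq π]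
        rw [Nat.cast_sum, sum_mul]
        exact sum_congr rfl fun t _ => by push_cast; ring
    _ = ∑ t ∈ range (k + 1), (t : K) * a t * expCoeff a (k - t) := by
        refine sum_congr rfl fun t ht => ?_
        rcases Nat.eq_zero_or_pos t with rfl | hpos
        · simp
        · rw [sum_count_mul_partWeight a hpos (Nat.lt_succ_iff.1 (mem_range.1 ht)), mul_assoc]
    _ = _ := by
        rw [← Nat.sum_antidiagonal_swap, Nat.sum_antidiagonal_eq_sum_range_succ_mk]
        rfl

lemma factorial_mul_expCoeff_succ (a : ℕ → K) (k : ℕ) :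
    ((k + 1)! : K) * expCoeff a (k + 1) = ∑ i ∈ range (k + 1),
      k.choose i * (i ! * expCoeff a i) * ((k - i + 1)! * a (k - i + 1)) := by
  rw [Nat.factorial_succ, Nat.cast_mul, mul_comm ((k + 1 : ℕ) : K), mul_assoc,
    cast_mul_expCoeff, Nat.sum_antidiagonal_succ', Nat.cast_zero, zero_mul, zero_mul, zero_add,
    mul_sum, ← Nat.sum_antidiagonal_eq_sum_range_succ
      (fun i j => (k.choose i : K) * (i ! * expCoeff a i) * ((j + 1)! * a (j + 1)))]
  refine sum_congr rfl fun ⟨i, j⟩ hij => ?_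
  rw [← mem_antidiagonal.1 hij, ← Nat.add_choose_mul_factorial_mul_factorial i j,
    Nat.factorial_succ j, Nat.choose_symm_add]
  push_cast
  ring

lemma eq_factorial_mul_expCoeff_of_succ_eq_sum (a : ℕ → K) {X : ℕ → K} (h0 : X 0 = 1)
    (hX : ∀ k, X (k + 1) = ∑ i ∈ range (k + 1),
      k.choose i * X i * ((k - i + 1)! * a (k - i + 1))) (k : ℕ) :
    X k = k ! * expCoeff a k := by
  induction k using Nat.strong_induction_on with
  | _ k ih =>
    rcases k with _ | k
    · simp [h0, expCoeff, partWeight]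
    · rw [hX, factorial_mul_expCoeff_succ]
      exact sum_congr rfl fun i hi => by rw [ih i (mem_range.1 hi)]

end Nat.Partition

open Nat.Partition in
theorem iteratedDeriv_eq_factorial_mul_expCoeff {𝕜 : Type*} [NontriviallyNormedField 𝕜]
    [CharZero 𝕜] {F g : 𝕜 → 𝕜} {x : 𝕜} {a : ℕ → 𝕜}
    (hF : ContDiffAt 𝕜 ∞ F x) (hg : ContDiffAt 𝕜 ∞ g x) (hFx : F x = 1)
    (hderiv : deriv F =ᶠ[𝓝 x] F * g)
    (hga : ∀ r, iteratedDeriv r g x = (r + 1)! * a (r + 1)) (k : ℕ) :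
    iteratedDeriv k F x = k ! * expCoeff a k := by
  refine eq_factorial_mul_expCoeff_of_succ_eq_sum a (X := fun k => iteratedDeriv k F x)
    (by simpa using hFx) (fun k => ?_) k
  have hk : ((k : ℕ∞) : WithTop ℕ∞) ≤ ∞ := by exact_mod_cast le_top
  rw [iteratedDeriv_succ', hderiv.iteratedDeriv_eq, iteratedDeriv_mul (hF.of_le hk) (hg.of_le hk)]
  simp_rw [hga]

section RationalFunction

variable {𝕜 : Type*} [NontriviallyNormedField 𝕜] {ι : Type*} [Fintype ι]

lemma logDeriv_one_add_mul (c x : 𝕜) : logDeriv (fun y => 1 + c * y) x = c / (1 + c * x) := by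
  rw [logDeriv_apply]
  simp

lemma logDeriv_pow_div_prod (N : ℕ) (l : ι → 𝕜) {x : 𝕜} (hx : 1 + x ≠ 0)
    (hl : ∀ i, 1 + l i * x ≠ 0) :
    logDeriv (fun y => (1 + y) ^ N / ∏ i, (1 + l i * y)) x
      = N / (1 + x) - ∑ i, l i / (1 + l i * x) := by
  rw [logDeriv_div (f := fun y => (1 + y) ^ N) x (pow_ne_zero N hx)
      (prod_ne_zero_iff.2 fun i _ => hl i) (by fun_prop) (by fun_prop),
    logDeriv_fun_pow (by fun_prop), logDeriv_prod (fun i _ => hl i) (fun i _ => by fun_prop)]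
  have h1 := logDeriv_one_add_mul (1 : 𝕜) x
  simp only [one_mul] at h1
  simp only [logDeriv_one_add_mul, h1, mul_one_div]

lemma eventually_one_add_mul_ne_zero (c : 𝕜) : ∀ᶠ y in 𝓝 0, 1 + c * y ≠ 0 :=
  (continuous_const.add (continuous_const.mul continuous_id)).continuousAt.eventually_ne
    (by simp)

lemma deriv_pow_div_prod_eventuallyEq (N : ℕ) (l : ι → 𝕜) :
    deriv (fun y => (1 + y) ^ N / ∏ i, (1 + l i * y)) =ᶠ[𝓝 0]
      (fun y => (1 + y) ^ N / ∏ i, (1 + l i * y)) *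
        fun y => N / (1 + y) - ∑ i, l i / (1 + l i * y) := by
  filter_upwards [eventually_one_add_mul_ne_zero (1 : 𝕜),
    eventually_all.2 fun i => eventually_one_add_mul_ne_zero (l i)] with y hy hl
  rw [one_mul] at hy
  have hF : (1 + y) ^ N / ∏ i, (1 + l i * y) ≠ 0 :=
    div_ne_zero (pow_ne_zero N hy) (prod_ne_zero_iff.2 fun i _ => hl i)
  rw [Pi.mul_apply, ← logDeriv_pow_div_prod N l hy hl, logDeriv_apply, mul_div_cancel₀ _ hF]

lemma contDiffAt_pow_div_prod (N : ℕ) (l : ι → 𝕜) {n : WithTop ℕ∞} :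
    ContDiffAt 𝕜 n (fun y => (1 + y) ^ N / ∏ i, (1 + l i * y)) 0 :=
  ContDiffAt.div (by fun_prop) (by fun_prop) (by simp)

lemma contDiffAt_div_one_add_mul (c : 𝕜) {n : WithTop ℕ∞} :
    ContDiffAt 𝕜 n (fun y => c / (1 + c * y)) 0 :=
  ContDiffAt.div (by fun_prop) (by fun_prop) (by simp)

lemma iteratedDeriv_div_one_add_mul_zero (c : 𝕜) (r : ℕ) :
    iteratedDeriv r (fun y => c / (1 + c * y)) 0 = (-1) ^ r * r ! * c ^ (r + 1) := by
  have h : (fun y => c / (1 + c * y)) = fun y => c * (c * y + 1)⁻¹ := by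
    funext y; rw [div_eq_mul_inv, add_comm]
  rw [h, iteratedDeriv_const_mul_field, iteratedDeriv_eq_iterate, iter_deriv_inv_linear]
  simp only [mul_zero, zero_add, one_zpow, mul_one]
  ring

lemma contDiffAt_logDeriv_pow_div_prod (N : ℕ) (l : ι → 𝕜) {n : WithTop ℕ∞} :
    ContDiffAt 𝕜 n (fun y => N / (1 + y) - ∑ i, l i / (1 + l i * y)) 0 :=
  ContDiffAt.sub (ContDiffAt.div (by fun_prop) (by fun_prop) (by simp))
    (ContDiffAt.sum fun i _ => contDiffAt_div_one_add_mul (l i))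

lemma iteratedDeriv_logDeriv_pow_div_prod_zero (N : ℕ) (l : ι → 𝕜) (r : ℕ) :
    iteratedDeriv r (fun y => N / (1 + y) - ∑ i, l i / (1 + l i * y)) 0
      = (-1) ^ r * r ! * (N - ∑ i, l i ^ (r + 1)) := by
  have h : (fun y : 𝕜 => N / (1 + y)) = fun y => (N : 𝕜) * (1 / (1 + 1 * y)) := by
    funext y; rw [one_mul, mul_one_div]
  rw [iteratedDeriv_fun_sub (f := fun y => (N : 𝕜) / (1 + y))
      (ContDiffAt.div (by fun_prop) (by fun_prop) (by simp))
      (ContDiffAt.sum fun i _ => contDiffAt_div_one_add_mul (l i)),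
    h, iteratedDeriv_const_mul_field, iteratedDeriv_div_one_add_mul_zero,
    iteratedDeriv_fun_sum fun i _ => contDiffAt_div_one_add_mul (l i)]
  simp only [iteratedDeriv_div_one_add_mul_zero, one_pow, mul_sub, mul_sum]
  ring

end RationalFunction

/-- Let `f(h) = (1+h)^{n+1} / ∏ᵢ (1 + lᵢ h)` with the `lᵢ` real.  Then
`f^{(n)}(0) = n! Σ_π ∏_{t ∈ π} [(−1)^{t−1}(n+1−s_t)]^{m(t,π)} / [m(t,π)! · t^{m(t,π)}]`,
where the sum runs over the (unordered) partitions `π` of the integer `n`,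
`m(t,π)` is the multiplicity of the part `t` in `π`, and `s_t = Σᵢ lᵢᵗ`
(the inner product is taken over the distinct parts `t` of `π`). -/
theorem iteratedDeriv_ratio_at_zero_partition_formula
    {n m : ℕ} (l : Fin m → ℝ)
    (f : ℝ → ℝ)
    (hf : f = fun h => (1 + h) ^ (n + 1) / ∏ i, (1 + l i * h)) :
    iteratedDeriv n f 0
      = (Nat.factorial n : ℝ) *
          ∑ π : Nat.Partition n,
            ∏ t ∈ π.parts.toFinset,
              ((-1 : ℝ) ^ (t - 1) * ((n : ℝ) + 1 - ∑ i, (l i) ^ t) / (t : ℝ))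
                  ^ (π.parts.count t)
                / (Nat.factorial (π.parts.count t) : ℝ) := by
  subst hf
  refine iteratedDeriv_eq_factorial_mul_expCoeff
    (a := fun t => (-1 : ℝ) ^ (t - 1) * ((n : ℝ) + 1 - ∑ i, l i ^ t) / t)
    (contDiffAt_pow_div_prod _ l) (contDiffAt_logDeriv_pow_div_prod _ l) (by simp)
    (deriv_pow_div_prod_eventuallyEq _ l) (fun r => ?_) n
  rw [iteratedDeriv_logDeriv_pow_div_prod_zero, Nat.factorial_succ, Nat.add_sub_cancel]
  push_cast
  field_simp
end

section
/- Let n = 3 and suppose α₁,…,α_m ∈ ℤ_{≥0}³ satisfy Σ_j α_j = (3,3,3), each α_j has at most two nonzero components, and each pairwise sum α_{j₁}+α_{j₂} has at most three nonzero components. Then each α_j has at least one zero component, and moreover the collection {α_j} is a refinement of one of the following four collections (up to permuting the three coordinates): {(3,3,0),(0,0,3)}, {(3,2,0),(0,1,3)}, {(2,2,0),(1,0,2),(0,1,1)}, {(2,1,0),(1,0,2),(0,2,1)}. -/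
open scoped BigOperators

/-- `α` (a family of `m` multidegrees) is a refinement of `γ` (a family of `k`
multidegrees): the index set of `α` can be partitioned into groups whose (pointwise)
sums give the members of `γ`. -/
def IsRefinementOf {m k n : ℕ} (α : Fin m → Fin n → ℕ) (γ : Fin k → Fin n → ℕ) : Prop :=
  ∃ φ : Fin m → Fin k, ∀ l, ∑ j ∈ Finset.univ.filter (fun j => φ j = l), α j = γ l

lemma refinement_trans {m k p n : ℕ} {α : Fin m → Fin n → ℕ} {γ : Fin k → Fin n → ℕ}
    {δ : Fin p → Fin n → ℕ} (h1 : IsRefinementOf α γ) (h2 : IsRefinementOf γ δ) :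
    IsRefinementOf α δ := by
  obtain ⟨φ, hφ⟩ := h1
  obtain ⟨ψ, hψ⟩ := h2
  refine ⟨ψ ∘ φ, fun l => ?_⟩
  rw [← hψ l]
  calc ∑ j ∈ Finset.univ.filter (fun j => (ψ ∘ φ) j = l), α j
      = ∑ j ∈ Finset.univ.filter
          (fun j => φ j ∈ Finset.univ.filter (fun l' => ψ l' = l)), α j := by
        congr 1
        ext j
        simp
    _ = ∑ l' ∈ Finset.univ.filter (fun l' => ψ l' = l),
          ∑ j ∈ Finset.univ.filter (fun j => φ j = l'), α j :=
        (Finset.sum_fiberwise_eq_sum_filter _ _ _ _).symm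
    _ = ∑ l' ∈ Finset.univ.filter (fun l' => ψ l' = l), γ l' :=
        Finset.sum_congr rfl fun l' _ => hφ l'

def MM (a b c : ℕ) : Fin 3 → Fin 3 → ℕ := ![![0,a,b], ![c,0,3-b], ![3-c,3-a,0]]

instance instDecRef {m k n : ℕ} (α : Fin m → Fin n → ℕ) (γ : Fin k → Fin n → ℕ) :
    Decidable (IsRefinementOf α γ) := by unfold IsRefinementOf; infer_instance

set_option maxHeartbeats 4000000 in
lemma key : ∀ a b c : Fin 4, ∃ σ : Equiv.Perm (Fin 3),
    IsRefinementOf (fun l i => MM a b c l (σ i)) ![![3,3,0], ![0,0,3]]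
    ∨ IsRefinementOf (fun l i => MM a b c l (σ i)) ![![3,2,0], ![0,1,3]]
    ∨ IsRefinementOf (fun l i => MM a b c l (σ i)) ![![2,2,0], ![1,0,2], ![0,1,1]]
    ∨ IsRefinementOf (fun l i => MM a b c l (σ i)) ![![2,1,0], ![1,0,2], ![0,2,1]] := by
  decide

/-- Classification of ball-type partitions for `(ℙ¹)³`: if `α₁,…,α_m ∈ ℤ_{≥0}³` satisfy
`Σⱼ αⱼ = (3,3,3)`, each `αⱼ` has at most two nonzero components, and each pairwise sum
has at most three nonzero components, then each `αⱼ` has a zero component, and up to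
permuting the three coordinates the collection refines one of
`{(3,3,0),(0,0,3)}`, `{(3,2,0),(0,1,3)}`, `{(2,2,0),(1,0,2),(0,1,1)}`,
`{(2,1,0),(1,0,2),(0,2,1)}`. -/
theorem ball_type_partition_dim_three {m : ℕ}
    (α : Fin m → Fin 3 → ℕ)
    (hsum : ∀ i, ∑ j, α j i = 3)
    (htwo : ∀ j, (Finset.univ.filter (fun i => α j i ≠ 0)).card ≤ 2)
    (hthree : ∀ j₁ j₂,
      (Finset.univ.filter (fun i => α j₁ i + α j₂ i ≠ 0)).card ≤ 3) :
    (∀ j, ∃ i, α j i = 0)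
      ∧ ∃ σ : Equiv.Perm (Fin 3),
          IsRefinementOf (fun j i => α j (σ i)) ![![3,3,0], ![0,0,3]]
          ∨ IsRefinementOf (fun j i => α j (σ i)) ![![3,2,0], ![0,1,3]]
          ∨ IsRefinementOf (fun j i => α j (σ i)) ![![2,2,0], ![1,0,2], ![0,1,1]]
          ∨ IsRefinementOf (fun j i => α j (σ i)) ![![2,1,0], ![1,0,2], ![0,2,1]] := by
  have hzero : ∀ j, ∃ i, α j i = 0 := by
    intro j
    by_contra h
    push_neg at h
    have huniv : Finset.univ.filter (fun i => α j i ≠ 0) = (Finset.univ : Finset (Fin 3)) := by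
      ext i; simpa using h i
    have hcard := htwo j
    rw [huniv] at hcard
    simp at hcard
  refine ⟨hzero, ?_⟩
  choose z hz using hzero
  set G : Fin 3 → Fin 3 → ℕ :=
    fun l i => ∑ j ∈ Finset.univ.filter (fun j => z j = l), α j i with hG
  have hGdiag : ∀ l : Fin 3, G l l = 0 := by
    intro l
    refine Finset.sum_eq_zero fun j hj => ?_
    rw [Finset.mem_filter] at hj
    rw [← hj.2]
    exact hz j
  have hGsum : ∀ i : Fin 3, G 0 i + G 1 i + G 2 i = 3 := by
    intro i
    have h : ∑ l : Fin 3, G l i = ∑ j, α j i :=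
      Finset.sum_fiberwise _ _ _
    rw [hsum i, Fin.sum_univ_three] at h
    exact h
  set a := G 0 1 with ha
  set b := G 0 2 with hb
  set c := G 1 0 with hc
  have h0 : G 0 0 = 0 := hGdiag 0
  have h1 : G 1 1 = 0 := hGdiag 1
  have h2 : G 2 2 = 0 := hGdiag 2
  have ea : a ≤ 3 := by have := hGsum 1; omega
  have eb : b ≤ 3 := by have := hGsum 2; omega
  have ec : c ≤ 3 := by have := hGsum 0; omega
  have hG12 : G 1 2 = 3 - b := by have := hGsum 2; omega
  have hG20 : G 2 0 = 3 - c := by have := hGsum 0; omega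
  have hG21 : G 2 1 = 3 - a := by have := hGsum 1; omega
  have hGM : ∀ l i, G l i = MM a b c l i := by
    intro l i
    fin_cases l <;> fin_cases i <;> simp_all [MM]
  obtain ⟨σ, hσ⟩ := key ⟨a, by omega⟩ ⟨b, by omega⟩ ⟨c, by omega⟩
  refine ⟨σ, ?_⟩
  have hαG : IsRefinementOf (fun j i => α j (σ i)) (fun l i => MM a b c l (σ i)) := by
    refine ⟨z, fun l => ?_⟩
    funext i
    rw [Finset.sum_apply]
    show ∑ j ∈ Finset.univ.filter (fun j => z j = l), α j (σ i) = MM a b c l (σ i)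
    rw [← hGM l (σ i)]
  have hσ' : IsRefinementOf (fun l i => MM a b c l (σ i)) ![![3,3,0], ![0,0,3]]
      ∨ IsRefinementOf (fun l i => MM a b c l (σ i)) ![![3,2,0], ![0,1,3]]
      ∨ IsRefinementOf (fun l i => MM a b c l (σ i)) ![![2,2,0], ![1,0,2], ![0,1,1]]
      ∨ IsRefinementOf (fun l i => MM a b c l (σ i)) ![![2,1,0], ![1,0,2], ![0,2,1]] := hσ
  exact hσ'.imp (refinement_trans hαG) (Or.imp (refinement_trans hαG)
    (Or.imp (refinement_trans hαG) (refinement_trans hαG)))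
end

section
/- Let E be an elliptic curve with an automorphism ρ of order 3 acting on H^{1,0}(E) by a character χ, and let Y be a projective variety with a μ₃-action ρ₁ such that H^n(Y,ℚ[ω]) decomposes into eigenspaces. Let Ỹ = (Y × E)/⟨ρ₁ × ρ⁻¹⟩. Then H^{n+1}(Ỹ, ℚ[ω]) ≅ [H^n_{χ₁}(Y) ⊗ H^1_{χ₂}(E)] ⊕ [H^n_{χ̄₁}(Y) ⊗ H^1_{χ̄₂}(E)], where χ_i are the characters whose eigenspaces contain the top-degree holomorphic forms. In particular, since dim_{ℚ[ω]} H^1_{χ₂}(E,ℚ[ω]) = 1, there is an isomorphism H^{n+1}_{χ̃}(Ỹ, ℚ[ω]) ≅ H^n_{χ₁}(Y, ℚ[ω]) of ℚ[ω]-vector spaces compatible with the Hodge filtrations (an isomorphism of Hodge structures of ball type). -/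
/-!
Without fixed vectors, `g ^ 3 = 1` forces `(g - ω) (g - ω²) = 0`, so `V = V_ω ⊕ V_ω²`, and
likewise `W = W_ω ⊕ W_ω²`. Hence `V ⊗ W` is the sum of the four blocks `V_a ⊗ W_b`, on which
`g ⊗ h²` acts by `a b²`. This scalar is `1` exactly on the diagonal blocks and is `ω` or `ω²`
off the diagonal, so independence of eigenspaces for distinct eigenvalues cuts the fixed part
down to the diagonal. When `W_ω` is a line, `V_ω ⊗ W_ω ≅ V_ω ⊗ K ≅ V_ω`.
-/

open Module Polynomial TensorProduct

namespace Module.End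

variable {K M : Type*} [Field K] [AddCommGroup M] [Module K M]

theorem eigenspace_le_eigenspace_pow (f : End K M) (μ : K) (n : ℕ) :
    f.eigenspace μ ≤ (f ^ n).eigenspace (μ ^ n) := by
  intro x hx
  rw [mem_eigenspace_iff] at hx ⊢
  induction n with
  | zero => simp
  | succ n ih => rw [pow_succ, mul_apply, hx, map_smul, ih, smul_smul, ← pow_succ']

theorem eigenspace_eq_ker_aeval (f : End K M) (a : K) :
    f.eigenspace a = LinearMap.ker (aeval f (X - C a)) := by
  rw [eigenspace_def, map_sub, aeval_X, aeval_C, Algebra.algebraMap_eq_smul_one]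

theorem eigenspace_sup_eigenspace_eq_top {f : End K M} {a b : K} (hab : a ≠ b)
    (hf : aeval f ((X - C a) * (X - C b)) = 0) :
    f.eigenspace a ⊔ f.eigenspace b = ⊤ := by
  rw [eigenspace_eq_ker_aeval, eigenspace_eq_ker_aeval,
    sup_ker_aeval_eq_ker_aeval_mul_of_coprime _
      (isCoprime_X_sub_C_of_isUnit_sub (sub_ne_zero.2 hab).isUnit), hf, LinearMap.ker_zero]

theorem eigenspace_eq_of_sup_eq_top {f : End K M} {μ : K} {s : Set K} (hμ : μ ∉ s)
    {A B : Submodule K M} (hA : A ≤ f.eigenspace μ) (hB : B ≤ ⨆ ν ∈ s, f.eigenspace ν)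
    (hAB : A ⊔ B = ⊤) : f.eigenspace μ = A := by
  have hdisj : Disjoint (f.eigenspace μ) B :=
    ((eigenspaces_iSupIndep f).disjoint_biSup hμ).mono_right hB
  refine (eq_of_le_of_inf_le_of_sup_le (z := B) hA ?_ ?_).symm
  · rw [hdisj.eq_bot]
    exact bot_le
  · rw [hAB]
    exact le_top

theorem aeval_eq_zero_of_pow_three_eq_one {ω : K} (hω : IsPrimitiveRoot ω 3) {f : End K M}
    (hf3 : f ^ 3 = 1) (hf1 : f.eigenspace 1 = ⊥) :
    aeval f ((X - C ω) * (X - C (ω ^ 2))) = 0 := by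
  have hsum : 1 + ω + ω ^ 2 = 0 := by
    simpa [Finset.sum_range_succ] using hω.geom_sum_eq_zero (by norm_num)
  have hC3 : C ω ^ 3 = 1 := by rw [← C_pow, hω.pow_eq_one, C_1]
  have hCsum : 1 + C ω + C ω ^ 2 = 0 := by rw [← C_pow, ← C_1, ← C_add, ← C_add, hsum, C_0]
  have hpoly : (X - C 1) * ((X - C ω) * (X - C (ω ^ 2))) = (X ^ 3 - 1 : K[X]) := by
    rw [C_1, C_pow]
    linear_combination (-X ^ 2 + C ω * X) * hCsum - hC3
  have hinj : Function.Injective (aeval f (X - C (1 : K))) := by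
    rw [← LinearMap.ker_eq_bot, ← eigenspace_eq_ker_aeval, hf1]
  ext x
  apply hinj
  rw [← mul_apply, ← map_mul, hpoly]
  simp [hf3]

theorem eigenspace_sup_eigenspace_sq_eq_top {ω : K} (hω : IsPrimitiveRoot ω 3) {f : End K M}
    (hf3 : f ^ 3 = 1) (hf1 : f.eigenspace 1 = ⊥) :
    f.eigenspace ω ⊔ f.eigenspace (ω ^ 2) = ⊤ := by
  refine eigenspace_sup_eigenspace_eq_top ?_ (aeval_eq_zero_of_pow_three_eq_one hω hf3 hf1)
  intro h
  have := hω.pow_inj (i := 1) (j := 2) (by norm_num) (by norm_num) (by rw [pow_one]; exact h)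
  omega

end Module.End

section TensorProduct

variable {K V W : Type*} [Field K] [AddCommGroup V] [Module K V] [AddCommGroup W] [Module K W]

theorem range_map_eigenspace_le_eigenspace_map (f : End K V) (k : End K W) (a b : K) :
    LinearMap.range (map (f.eigenspace a).subtype (k.eigenspace b).subtype)
      ≤ End.eigenspace (map f k) (a * b) := by
  rw [range_mapIncl, Submodule.map₂_le]
  intro x hx y hy
  rw [End.mem_eigenspace_iff] at hx hy ⊢
  rw [mk_apply, map_tmul, hx, hy, smul_tmul_smul]

theorem range_map_eigenspace_le_eigenspace_map_pow (f : End K V) (k : End K W) {a b c : K}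
    (n : ℕ) (hc : a * b ^ n = c) :
    LinearMap.range (map (f.eigenspace a).subtype (k.eigenspace b).subtype)
      ≤ End.eigenspace (map f (k ^ n)) c :=
  hc ▸ (range_mapIncl_mono le_rfl (k.eigenspace_le_eigenspace_pow b n)).trans
    (range_map_eigenspace_le_eigenspace_map f (k ^ n) a (b ^ n))

theorem range_map_subtype_sup_eq_top {S S' : Submodule K V} {T T' : Submodule K W}
    (hS : S ⊔ S' = ⊤) (hT : T ⊔ T' = ⊤) :
    (LinearMap.range (map S.subtype T.subtype) ⊔ LinearMap.range (map S'.subtype T'.subtype))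
      ⊔ (LinearMap.range (map S.subtype T'.subtype)
        ⊔ LinearMap.range (map S'.subtype T.subtype)) = ⊤ := by
  rw [← map₂_mk_top_top_eq_top, ← hS, ← hT, Submodule.map₂_sup_left, Submodule.map₂_sup_right,
    Submodule.map₂_sup_right]
  simp only [range_mapIncl]
  ac_rfl

theorem nonempty_range_map_subtype_equiv_of_finrank_eq_one (S : Submodule K V)
    {T : Submodule K W} (hT : finrank K T = 1) :
    Nonempty (LinearMap.range (map S.subtype T.subtype) ≃ₗ[K] S) := by
  have : Module.Finite K T := Module.finite_of_finrank_eq_succ hT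
  let e : T ≃ₗ[K] K := LinearEquiv.ofFinrankEq _ _ (by rw [hT, finrank_self])
  exact ⟨(LinearEquiv.ofInjective _ (Module.Flat.tensorProduct_mapIncl_injective_of_right S T)).symm
    ≪≫ₗ TensorProduct.congr (LinearEquiv.refl K S) e ≪≫ₗ TensorProduct.rid K S⟩

end TensorProduct

theorem halftwist_kunneth_eigenspace_general
    {K : Type*} [Field K] (ω : K) (hω : IsPrimitiveRoot ω 3)
    {V W : Type*} [AddCommGroup V] [Module K V] [AddCommGroup W] [Module K W]
    (g : Module.End K V) (h : Module.End K W)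
    (hg3 : g ^ 3 = 1) (hh3 : h ^ 3 = 1)
    (hgtriv : Module.End.eigenspace g 1 = ⊥)
    (hhtriv : Module.End.eigenspace h 1 = ⊥) :
    (Module.End.eigenspace
        ((TensorProduct.map (g : V →ₗ[K] V) ((h ^ 2 : Module.End K W) : W →ₗ[K] W))
          : Module.End K (V ⊗[K] W)) 1
      = LinearMap.range (TensorProduct.map
            (Module.End.eigenspace g ω).subtype (Module.End.eigenspace h ω).subtype)
        ⊔ LinearMap.range (TensorProduct.map
            (Module.End.eigenspace g (ω ^ 2)).subtype
            (Module.End.eigenspace h (ω ^ 2)).subtype))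
    ∧ (Module.finrank K (Module.End.eigenspace h ω) = 1 →
        Nonempty
          (↥(LinearMap.range (TensorProduct.map
              (Module.End.eigenspace g ω).subtype (Module.End.eigenspace h ω).subtype))
            ≃ₗ[K] ↥(Module.End.eigenspace g ω))) := by
  have hω3 := hω.pow_eq_one
  refine ⟨?_, nonempty_range_map_subtype_equiv_of_finrank_eq_one _⟩
  refine Module.End.eigenspace_eq_of_sup_eq_top (s := {ω ^ 2, ω}) ?_ ?_ ?_
    (range_map_subtype_sup_eq_top (g.eigenspace_sup_eigenspace_sq_eq_top hω hg3 hgtriv)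
      (h.eigenspace_sup_eigenspace_sq_eq_top hω hh3 hhtriv))
  · have := hω.pow_ne_one_of_pos_of_lt (l := 2) (by norm_num) (by norm_num)
    simp [Ne.symm this, Ne.symm (hω.ne_one (by norm_num))]
  · refine sup_le (range_map_eigenspace_le_eigenspace_map_pow g h 2 ?_)
      (range_map_eigenspace_le_eigenspace_map_pow g h 2 ?_)
    · linear_combination hω3
    · linear_combination (ω ^ 3 + 1) * hω3
  · rw [iSup_pair]
    refine sup_le_sup (range_map_eigenspace_le_eigenspace_map_pow g h 2 ?_)
      (range_map_eigenspace_le_eigenspace_map_pow g h 2 ?_)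
    · linear_combination ω ^ 2 * hω3
    · linear_combination ω * hω3

/-- Half-twist construction (Künneth eigenspace computation).  Over a field `K`
containing a primitive cube root of unity `ω` (e.g. `K = ℚ[ω]`), let `g` be the order-3
operator induced by `ρ₁` on `V = H^n(Y, K)` and `h` the operator induced by `ρ` on
`W = H^1(E, K)`.  Assume the trivial eigenparts vanish (as for the relevant isotypic
decompositions of `Y` and of the elliptic curve `E`).  Then the cohomology of
`Ỹ = (Y × E)/⟨ρ₁ × ρ⁻¹⟩`, i.e. the invariants of `g ⊗ h⁻¹ = g ⊗ h²` on `V ⊗ W`,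
decomposes as `(V_χ ⊗ W_χ) ⊕ (V_χ̄ ⊗ W_χ̄)`; and since `dim W_χ = 1`, the `χ̃`-part
`V_χ ⊗ W_χ` is isomorphic to `V_χ` as a `K`-vector space. -/
theorem halftwist_kunneth_eigenspace
    {K : Type*} [Field K] (ω : K) (hω : IsPrimitiveRoot ω 3)
    {V W : Type*} [AddCommGroup V] [Module K V] [AddCommGroup W] [Module K W]
    [FiniteDimensional K V] [FiniteDimensional K W]
    (g : Module.End K V) (h : Module.End K W)
    (hg3 : g ^ 3 = 1) (hh3 : h ^ 3 = 1)
    (hgtriv : Module.End.eigenspace g 1 = ⊥)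
    (hhtriv : Module.End.eigenspace h 1 = ⊥) :
    (Module.End.eigenspace
        ((TensorProduct.map (g : V →ₗ[K] V) ((h ^ 2 : Module.End K W) : W →ₗ[K] W))
          : Module.End K (V ⊗[K] W)) 1
      = LinearMap.range (TensorProduct.map
            (Module.End.eigenspace g ω).subtype (Module.End.eigenspace h ω).subtype)
        ⊔ LinearMap.range (TensorProduct.map
            (Module.End.eigenspace g (ω ^ 2)).subtype
            (Module.End.eigenspace h (ω ^ 2)).subtype))
    ∧ (Module.finrank K (Module.End.eigenspace h ω) = 1 →
        Nonempty
          (↥(LinearMap.range (TensorProduct.map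
              (Module.End.eigenspace g ω).subtype (Module.End.eigenspace h ω).subtype))
            ≃ₗ[K] ↥(Module.End.eigenspace g ω))) :=
  halftwist_kunneth_eigenspace_general ω hω g h hg3 hh3 hgtriv hhtriv
end

section
/- Let M be the monodromy operator on a polarized ℚ[ω]-Hodge structure of ball type H (with Hodge filtration F^n ⊂ F^{n-1} = H_ℂ, dim F^n = 1, and h^{p,q} = 0 for p ≤ n−2) arising as the limit of a one-parameter degeneration, and suppose the fixed part (F^n)^M is nonzero. Let N = log(M^{un}) be the nilpotent part of M. Then N = 0, i.e., M is semisimple, and by Borel's monodromy theorem M has finite order. -/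
/-! Let `a > 0` with `M ^ a` unipotent and let `x` span `F` with `M x = x`. Since `h x x > 0`,
`W = x^⊥`, so the isometry `P = M ^ a` fixes `x` and preserves the negative definite space `W`.
If `P ≠ 1` on `W`, a Jordan block of `P` yields `u ≠ 0` and `v` in `W` with `P u = u` and
`P v = v + u`; comparing `h (P v) (P v)` with `h (P² v) (P² v)` forces `h u u = 0`, which
definiteness forbids. Hence `M ^ a = 1`, so `M^{un} ^ a * M^{ss} ^ a = 1`; a semisimple
unipotent endomorphism is the identity, which gives first `M^{ss} ^ a = 1`, then
`M^{un} ^ a = 1`, making `M^{un}` semisimple and therefore `M^{un} = 1`. -/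

theorem isNilpotent_pow_sub_one {R : Type*} [Ring R] {u : R} (hu : IsNilpotent (u - 1)) (n : ℕ) :
    IsNilpotent (u ^ n - 1) := by
  rw [← mul_geom_sum]
  refine Commute.isNilpotent_mul_right (Commute.sum_right _ _ _ fun i _ => ?_) hu
  exact ((Commute.refl u).pow_right i).sub_left (Commute.one_left _)

namespace Module.End

variable {K V : Type*} [Field K] [AddCommGroup V] [Module K V]

theorem eq_one_of_isSemisimple_of_isNilpotent_sub_one {f : End K V} (hs : f.IsSemisimple)
    (hn : IsNilpotent (f - 1)) : f = 1 := by
  have hs' : (f - algebraMap K (End K V) 1).IsSemisimple := isSemisimple_sub_algebraMap_iff.mpr hs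
  rw [map_one] at hs'
  exact sub_eq_zero.mp (eq_zero_of_isNilpotent_isSemisimple hn hs')

open Polynomial in
theorem isSemisimple_of_pow_eq_one [CharZero K] {f : End K V} {a : ℕ} (ha : a ≠ 0)
    (hf : f ^ a = 1) : f.IsSemisimple := by
  have hsep : (X ^ a - C (1 : K)).Separable :=
    separable_X_pow_sub_C 1 (Nat.cast_ne_zero.mpr ha) one_ne_zero
  refine isSemisimple_of_squarefree_aeval_eq_zero hsep.squarefree ?_
  simp [hf]

theorem eq_one_of_mul_pow_eq_one [CharZero K] [FiniteDimensional K V] {u s : End K V}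
    (hcomm : Commute u s) (hu : IsNilpotent (u - 1)) (hs : s.IsSemisimple) {a : ℕ} (ha : a ≠ 0)
    (hus : (u * s) ^ a = 1) : u = 1 := by
  rw [hcomm.mul_pow] at hus
  have hs_nil : IsNilpotent (s ^ a - 1) := by
    have hfac : s ^ a - 1 = (1 - u ^ a) * s ^ a := by rw [sub_mul, one_mul, hus]
    rw [hfac]
    refine ((Commute.one_left _).sub_left (hcomm.pow_pow a a)).isNilpotent_mul_right ?_
    simpa using (isNilpotent_pow_sub_one hu a).neg
  have hsa : s ^ a = 1 := eq_one_of_isSemisimple_of_isNilpotent_sub_one (hs.pow a) hs_nil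
  rw [hsa, mul_one] at hus
  exact eq_one_of_isSemisimple_of_isNilpotent_sub_one (isSemisimple_of_pow_eq_one ha hus) hu

theorem exists_mem_apply_ne_zero_and_apply_apply_eq_zero {R M : Type*} [Semiring R]
    [AddCommMonoid M] [Module R M] {N : End R M} (hN : IsNilpotent N) {p : Submodule R M}
    (hp : ∀ w ∈ p, N w ∈ p) {w : M} (hw : w ∈ p) (hNw : N w ≠ 0) :
    ∃ v ∈ p, N v ≠ 0 ∧ N (N v) = 0 := by
  obtain ⟨k, hk⟩ := hN
  have hkw : (N ^ k) w = 0 := by simp [hk]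
  clear hk
  induction k generalizing w with
  | zero => exact absurd (by simpa using congr_arg N hkw) hNw
  | succ k ih =>
    by_cases hNNw : N (N w) = 0
    · exact ⟨w, hw, hNw, hNNw⟩
    · exact ih (hp w hw) hNNw (by rwa [← mul_apply, ← pow_succ])

end Module.End

section SesquilinearForm

variable {K V : Type*} [Field K] [AddCommGroup V] [Module K V] {σ : K →+* K}
  (h : V →ₗ[K] V →ₛₗ[σ] K)

theorem LinearMap.apply_pow_apply_pow {T : Module.End K V} (hT : ∀ x y, h (T x) (T y) = h x y)
    (n : ℕ) (x y : V) : h ((T ^ n) x) ((T ^ n) y) = h x y := by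
  induction n with
  | zero => rfl
  | succ n ih => rw [pow_succ', Module.End.mul_apply, Module.End.mul_apply, hT, ih]

theorem LinearMap.apply_self_eq_zero_of_apply_eq_add [CharZero K] {T : Module.End K V}
    (hT : ∀ x y, h (T x) (T y) = h x y) {u v : V} (hu : T u = u) (hv : T v = v + u) :
    h u u = 0 := by
  have e1 := hT v v
  have e2 := hT (v + u) (v + u)
  rw [hv] at e1
  rw [map_add, hv, hu] at e2
  simp only [map_add, LinearMap.add_apply] at e1 e2
  linear_combination (e2 - e1) / 2

theorem LinearMap.apply_eq_self_of_isNilpotent_sub_one [CharZero K] {T : Module.End K V}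
    (hT : IsNilpotent (T - 1)) (hiso : ∀ x y, h (T x) (T y) = h x y) {W : Submodule K V}
    (hW : ∀ w ∈ W, T w ∈ W) (hani : ∀ w ∈ W, h w w = 0 → w = 0) :
    ∀ w ∈ W, T w = w := by
  by_contra! ⟨w, hwW, hw⟩
  have hNW : ∀ w ∈ W, (T - 1) w ∈ W := fun w hw => W.sub_mem (hW w hw) hw
  obtain ⟨v, hvW, hu0, hu⟩ := Module.End.exists_mem_apply_ne_zero_and_apply_apply_eq_zero
    hT hNW hwW (by simpa [sub_eq_zero] using hw)
  set u := (T - 1) v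
  have hTu : T u = u := by simpa [sub_eq_zero] using hu
  have hTv : T v = v + u := by simp [u]
  exact hu0 (hani u (hNW v hvW) (h.apply_self_eq_zero_of_apply_eq_add hiso hTu hTv))

theorem LinearMap.mem_of_apply_eq_zero_of_isCompl_span_singleton {x : V} (hx : h x x ≠ 0)
    {W : Submodule K V} (hcompl : IsCompl (K ∙ x) W) (horth : ∀ y ∈ W, h x y = 0)
    {v : V} (hv : h x v = 0) : v ∈ W := by
  obtain ⟨y, hy, w, hw, rfl⟩ :=
    Submodule.mem_sup.mp (hcompl.sup_eq_top ▸ Submodule.mem_top (x := v))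
  obtain ⟨c, rfl⟩ := Submodule.mem_span_singleton.mp hy
  have hc : c = 0 := by simpa [horth w hw, hx] using hv
  simpa [hc] using hw

theorem LinearMap.eq_one_of_isNilpotent_sub_one [CharZero K] {T : Module.End K V}
    (hT : IsNilpotent (T - 1)) (hiso : ∀ x y, h (T x) (T y) = h x y) {x : V} (hx : h x x ≠ 0)
    (hTx : T x = x) {W : Submodule K V} (hcompl : IsCompl (K ∙ x) W)
    (horth : ∀ y ∈ W, h x y = 0) (hani : ∀ w ∈ W, h w w = 0 → w = 0) : T = 1 := by
  have hW : ∀ w ∈ W, T w ∈ W := fun w hw =>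
    h.mem_of_apply_eq_zero_of_isCompl_span_singleton hx hcompl horth
      (by rw [← hTx, hiso, horth w hw])
  refine LinearMap.ext_on_codisjoint hcompl.codisjoint (LinearMap.eqOn_span' ?_)
    (h.apply_eq_self_of_isNilpotent_sub_one hT hiso hW hani)
  simpa using hTx

end SesquilinearForm

theorem monodromy_finite_order_general
    {V : Type*} [AddCommGroup V] [Module ℂ V] [FiniteDimensional ℂ V]
    (M Mun Mss : Module.End ℂ V)
    (hjordan : M = Mun * Mss) (hcomm : Commute Mun Mss)
    (hun : IsNilpotent (Mun - 1)) (hss : Mss.IsSemisimple)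
    (hquasi : ∃ a : ℕ, 0 < a ∧ IsNilpotent (M ^ a - 1))
    (h : V →ₗ[ℂ] V →ₗ⋆[ℂ] ℂ)
    (hinv : ∀ x y, h (M x) (M y) = h x y)
    (F W : Submodule ℂ V) (hFrank : Module.finrank ℂ F = 1)
    (hcompl : IsCompl F W)
    (horth : ∀ x ∈ F, ∀ y ∈ W, h x y = 0)
    (hpos : ∀ x ∈ F, x ≠ 0 → 0 < (h x x).re)
    (hneg : ∀ y ∈ W, y ≠ 0 → (h y y).re < 0)
    (hfix : ∃ x ∈ F, x ≠ 0 ∧ M x = x) :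
    Mun = 1 ∧ M = Mss ∧ ∃ k : ℕ, 0 < k ∧ M ^ k = 1 := by
  obtain ⟨a, ha, hnil⟩ := hquasi
  obtain ⟨x, hxF, hx0, hMx⟩ := hfix
  have hF : F = ℂ ∙ x :=
    (Submodule.eq_of_le_of_finrank_eq (Submodule.span_le.mpr (by simpa using hxF))
      (by rw [finrank_span_singleton hx0, hFrank])).symm
  have hxx : h x x ≠ 0 := fun h0 => by simpa [h0] using hpos x hxF hx0
  have hani : ∀ y ∈ W, h y y = 0 → y = 0 := fun y hy hyy => by
    by_contra hy0
    simpa [hyy] using hneg y hy hy0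
  have hMa : M ^ a = 1 := h.eq_one_of_isNilpotent_sub_one hnil (h.apply_pow_apply_pow hinv a) hxx
    (by rw [Module.End.pow_apply, Function.iterate_fixed hMx]) (hF ▸ hcompl) (horth x hxF) hani
  have hMun : Mun = 1 := Module.End.eq_one_of_mul_pow_eq_one hcomm hun hss ha.ne' (hjordan ▸ hMa)
  exact ⟨hMun, by rw [hjordan, hMun, one_mul], a, ha, hMa⟩

/-- Finite order of the monodromy of a degeneration of ball-type Hodge structures.
`V = H_ℂ` carries a polarization `h` (a Hermitian form, linear in the first and
conjugate-linear in the second variable) of signature `(1, dim−1)`: positive on the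
one-dimensional piece `F = F^n` (the `(n,0)`-part) and negative on an `h`-orthogonal
complement `W` (the `(n−1,1)`-part); all other Hodge pieces vanish (ball type).  The
monodromy `M` preserves `h`, has Jordan decomposition `M = M^{un} ∘ M^{ss}` with
`M^{un}` unipotent (so `N = log M^{un}` is defined) and `M^{ss}` semisimple, is
quasi-unipotent (Borel), and its fixed part in `F` is nonzero.  Then `N = 0`,
i.e. `M^{un} = 1` so `M = M^{ss}` is semisimple, and `M` has finite order. -/
theorem monodromy_finite_order
    {V : Type*} [AddCommGroup V] [Module ℂ V] [FiniteDimensional ℂ V]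
    (M Mun Mss : Module.End ℂ V)
    (hjordan : M = Mun * Mss) (hcomm : Commute Mun Mss)
    (hun : IsNilpotent (Mun - 1)) (hss : Mss.IsSemisimple)
    (hquasi : ∃ a : ℕ, 0 < a ∧ IsNilpotent (M ^ a - 1))
    (h : V →ₗ[ℂ] V →ₗ⋆[ℂ] ℂ)
    (hherm : ∀ x y, h x y = starRingEnd ℂ (h y x))
    (hinv : ∀ x y, h (M x) (M y) = h x y)
    (F W : Submodule ℂ V) (hFrank : Module.finrank ℂ F = 1)
    (hcompl : IsCompl F W)
    (horth : ∀ x ∈ F, ∀ y ∈ W, h x y = 0)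
    (hpos : ∀ x ∈ F, x ≠ 0 → 0 < (h x x).re)
    (hneg : ∀ y ∈ W, y ≠ 0 → (h y y).re < 0)
    (hfix : ∃ x ∈ F, x ≠ 0 ∧ M x = x) :
    Mun = 1 ∧ M = Mss ∧ ∃ k : ℕ, 0 < k ∧ M ^ k = 1 :=
  monodromy_finite_order_general M Mun Mss hjordan hcomm hun hss hquasi h hinv F W hFrank hcompl
    horth hpos hneg hfix
end

section
/- Let a_j^i ≥ 0 be integers (1 ≤ j ≤ m, 1 ≤ i ≤ n, n ≥ 3) with Σ_j a_j^i = 3 for all i. Then the quantity Σ_{I∈Π_n, |I|≤n−2} (ε_I − δ_I) ∏_{A∈I} (Σ_j ∏_{i∈A} a_j^i) is zero if and only if (a) for every j, the vector (a_j^1,…,a_j^n) has at most two nonzero entries, and (b) for all j₁, j₂ and all 4-element subsets {i₁,i₂,i₃,i₄} ⊆ {1,…,n}, a_{j₁}^{i₁} a_{j₁}^{i₂} a_{j₂}^{i₃} a_{j₂}^{i₄} = 0 whenever i₁,i₂,i₃,i₄ are distinct (equivalently, each pairwise sum of rows has at most three nonzero entries). -/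
open scoped BigOperators

open Finset

/-- Pad a pairwise-disjoint family of nonempty finsets with singletons to get a
finpartition of `univ : Finset (Fin n)`. -/
def padPartition {n : ℕ} (B : Finset (Finset (Fin n)))
    (hne : ∀ A ∈ B, A.Nonempty)
    (hdisj : (B : Set (Finset (Fin n))).PairwiseDisjoint id) :
    Finpartition (Finset.univ : Finset (Fin n)) where
  parts := B ∪ (Finset.univ \ B.sup id).image (fun i => {i})
  supIndep := by
    rw [Finset.supIndep_iff_pairwiseDisjoint]
    intro A hA C hC hAC
    simp only [coe_union, Set.mem_union, coe_image, Set.mem_image, mem_coe,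
      mem_sdiff, Finset.mem_univ, true_and] at hA hC
    rcases hA with hA | ⟨i, hi, rfl⟩ <;> rcases hC with hC | ⟨k, hk, rfl⟩
    · exact hdisj hA hC hAC
    · refine Finset.disjoint_left.2 fun x hx hx' => ?_
      simp only [id_eq, Finset.mem_singleton] at hx hx'
      exact hk (Finset.mem_sup.2 ⟨A, hA, hx' ▸ hx⟩)
    · refine Finset.disjoint_left.2 fun x hx hx' => ?_
      simp only [id_eq, Finset.mem_singleton] at hx hx'
      exact hi (Finset.mem_sup.2 ⟨C, hC, hx ▸ hx'⟩)
    · refine Finset.disjoint_left.2 fun x hx hx' => ?_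
      simp only [id_eq, Finset.mem_singleton] at hx hx'
      exact hAC (by rw [← hx, ← hx'])
  sup_parts := by
    rw [Finset.sup_union]
    apply Finset.eq_univ_of_forall
    intro x
    by_cases hx : x ∈ B.sup id
    · exact Finset.mem_union_left _ hx
    · refine Finset.mem_union_right _ ?_
      rw [Finset.sup_image]
      exact Finset.mem_sup.2 ⟨x, Finset.mem_sdiff.2 ⟨Finset.mem_univ _, hx⟩,
        Finset.mem_singleton_self x⟩
  bot_notMem := by
    simp only [Finset.bot_eq_empty, Finset.mem_union, Finset.mem_image, not_or]
    constructor
    · intro h; exact (hne _ h).ne_empty rfl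
    · rintro ⟨i, -, h⟩; exact (Finset.singleton_ne_empty i) h

lemma padPartition_parts {n : ℕ} (B : Finset (Finset (Fin n)))
    (hne : ∀ A ∈ B, A.Nonempty) (hdisj : (B : Set (Finset (Fin n))).PairwiseDisjoint id) :
    (padPartition B hne hdisj).parts
      = B ∪ (Finset.univ \ B.sup id).image (fun i => {i}) := rfl

lemma padPartition_disjUnion {n : ℕ} (B : Finset (Finset (Fin n))) :
    Disjoint B ((Finset.univ \ B.sup id).image (fun i : Fin n => {i})) := by
  refine Finset.disjoint_left.2 ?_
  rintro A hA hA'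
  simp only [Finset.mem_image, Finset.mem_sdiff] at hA'
  obtain ⟨i, ⟨-, hi⟩, rfl⟩ := hA'
  exact hi (Finset.mem_sup.2 ⟨{i}, hA, Finset.mem_singleton_self i⟩)

lemma padPartition_card {n : ℕ} (B : Finset (Finset (Fin n)))
    (hne : ∀ A ∈ B, A.Nonempty) (hdisj : (B : Set (Finset (Fin n))).PairwiseDisjoint id) :
    (padPartition B hne hdisj).parts.card = B.card + (n - (B.sup id).card) := by
  rw [padPartition_parts, Finset.card_union_of_disjoint (padPartition_disjUnion B),
    Finset.card_image_of_injective _ (fun x y h => Finset.singleton_injective h),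
    Finset.card_sdiff_of_subset (Finset.subset_univ _)]
  simp

lemma padPartition_prod {n : ℕ} {M : Type*} [CommMonoid M] (B : Finset (Finset (Fin n)))
    (hne : ∀ A ∈ B, A.Nonempty) (hdisj : (B : Set (Finset (Fin n))).PairwiseDisjoint id)
    (f : Finset (Fin n) → M) :
    ∏ A ∈ (padPartition B hne hdisj).parts, f A
      = (∏ A ∈ B, f A) * ∏ i ∈ Finset.univ \ B.sup id, f {i} := by
  rw [padPartition_parts, Finset.prod_union (padPartition_disjUnion B),
    Finset.prod_image (fun x _ y _ h => Finset.singleton_injective h)]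

/-- For a partition with at most `n - 2` parts, `ε_I - δ_I ≥ 1`. -/
lemma coeff_ge_one {n : ℕ} (hn : 3 ≤ n)
    (I : Finpartition (Finset.univ : Finset (Fin n))) (hI : I.parts.card ≤ n - 2) :
    (1 : ℤ) ≤ (∏ A ∈ I.parts, (Nat.factorial (A.card - 1) : ℤ))
        - (if (I.parts.filter (fun A => 2 ≤ A.card)).card = 1 then 1 else 0) := by
  have hfact : ∀ A ∈ I.parts, (1 : ℤ) ≤ (Nat.factorial (A.card - 1) : ℤ) := by
    intro A _; exact_mod_cast Nat.one_le_iff_ne_zero.2 (Nat.factorial_ne_zero _)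
  have hcast : (∏ A ∈ I.parts, (Nat.factorial (A.card - 1) : ℤ))
      = ((∏ A ∈ I.parts, Nat.factorial (A.card - 1) : ℕ) : ℤ) := by push_cast; rfl
  have hprodN : 0 < ∏ A ∈ I.parts, Nat.factorial (A.card - 1) :=
    Finset.prod_pos fun A _ => Nat.factorial_pos _
  have hprod1 : (1 : ℤ) ≤ ∏ A ∈ I.parts, (Nat.factorial (A.card - 1) : ℤ) := by
    rw [hcast]; exact_mod_cast hprodN
  split_ifs with hδ
  · -- exactly one block of size ≥ 2; show it has size ≥ 3, so ε ≥ 2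
    obtain ⟨A₀, hA₀⟩ := Finset.card_eq_one.1 hδ
    have hA₀mem : A₀ ∈ I.parts ∧ 2 ≤ A₀.card := by
      have := Finset.mem_filter.1 (hA₀ ▸ Finset.mem_singleton_self A₀)
      exact ⟨this.1, this.2⟩
    have hsum : ∑ A ∈ I.parts, A.card = n := by
      rw [I.sum_card_parts]; simp
    have hsplit := Finset.sum_filter_add_sum_filter_not I.parts
      (fun A => 2 ≤ A.card) (fun A => A.card)
    have hones : ∑ A ∈ I.parts.filter (fun A => ¬ 2 ≤ A.card), A.card
        = (I.parts.filter (fun A => ¬ 2 ≤ A.card)).card := by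
      rw [Finset.card_eq_sum_ones]
      refine Finset.sum_congr rfl fun A hA => ?_
      have h1 : A.Nonempty := I.nonempty_of_mem_parts (Finset.mem_filter.1 hA).1
      have h2 : ¬ 2 ≤ A.card := (Finset.mem_filter.1 hA).2
      have := Finset.card_pos.2 h1
      omega
    have hcards := Finset.card_filter_add_card_filter_not
      (s := I.parts) (p := fun A => 2 ≤ A.card)
    have hsumt : ∑ A ∈ I.parts.filter (fun A => 2 ≤ A.card), A.card = A₀.card := by
      rw [hA₀, Finset.sum_singleton]
    have hA₀3 : 3 ≤ A₀.card := by omega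
    have h2 : (2 : ℤ) ≤ (Nat.factorial (A₀.card - 1) : ℤ) := by
      have : 2 ≤ Nat.factorial (A₀.card - 1) := by
        calc 2 = Nat.factorial 2 := rfl
        _ ≤ Nat.factorial (A₀.card - 1) := Nat.factorial_le (by omega)
      exact_mod_cast this
    have hle : Nat.factorial (A₀.card - 1)
        ≤ ∏ A ∈ I.parts, Nat.factorial (A.card - 1) :=
      Finset.single_le_prod' (f := fun A => Nat.factorial (A.card - 1))
        (fun A _ => Nat.one_le_iff_ne_zero.2 (Nat.factorial_ne_zero _))
        hA₀mem.1
    have h2' : (2 : ℤ) ≤ ∏ A ∈ I.parts, (Nat.factorial (A.card - 1) : ℤ) := by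
      rw [hcast]
      have : 2 ≤ ∏ A ∈ I.parts, Nat.factorial (A.card - 1) := by
        have h2n : 2 ≤ Nat.factorial (A₀.card - 1) := by
          calc 2 = Nat.factorial 2 := rfl
          _ ≤ Nat.factorial (A₀.card - 1) := Nat.factorial_le (by omega)
        omega
      exact_mod_cast this
    linarith
  · linarith

/-- A partition with at most `n - 2` parts has a block of size `≥ 3` or two distinct
blocks of size `≥ 2`. -/
lemma shape_lemma {n : ℕ} (hn : 3 ≤ n)
    (I : Finpartition (Finset.univ : Finset (Fin n))) (hI : I.parts.card ≤ n - 2) :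
    (∃ A ∈ I.parts, 3 ≤ A.card) ∨
      (∃ A ∈ I.parts, ∃ B ∈ I.parts, A ≠ B ∧ 2 ≤ A.card ∧ 2 ≤ B.card) := by
  by_contra hcon
  push_neg at hcon
  obtain ⟨h3, h22⟩ := hcon
  have hsum : ∑ A ∈ I.parts, A.card = n := by
    rw [I.sum_card_parts]; simp
  have hsplit := Finset.sum_filter_add_sum_filter_not I.parts
    (fun A => 2 ≤ A.card) (fun A => A.card)
  have hones : ∑ A ∈ I.parts.filter (fun A => ¬ 2 ≤ A.card), A.card
      = (I.parts.filter (fun A => ¬ 2 ≤ A.card)).card := by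
    rw [Finset.card_eq_sum_ones]
    refine Finset.sum_congr rfl fun A hA => ?_
    have h1 : A.Nonempty := I.nonempty_of_mem_parts (Finset.mem_filter.1 hA).1
    have h2 : ¬ 2 ≤ A.card := (Finset.mem_filter.1 hA).2
    have := Finset.card_pos.2 h1
    omega
  have hcards := Finset.card_filter_add_card_filter_not
    (s := I.parts) (p := fun A => 2 ≤ A.card)
  have htcard : (I.parts.filter (fun A => 2 ≤ A.card)).card ≤ 1 := by
    by_contra htc
    push_neg at htc
    obtain ⟨A, B, hA, hB, hAB⟩ := Finset.one_lt_card_iff.1 htc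
    have hA' := Finset.mem_filter.1 hA
    have hB' := Finset.mem_filter.1 hB
    have := h22 A hA'.1 B hB'.1 hAB hA'.2
    omega
  have htsum : ∑ A ∈ I.parts.filter (fun A => 2 ≤ A.card), A.card
      ≤ 2 * (I.parts.filter (fun A => 2 ≤ A.card)).card := by
    rw [two_mul]
    have : ∀ A ∈ I.parts.filter (fun A => 2 ≤ A.card), A.card ≤ 2 := by
      intro A hA
      have := h3 A (Finset.mem_filter.1 hA).1
      omega
    calc ∑ A ∈ I.parts.filter (fun A => 2 ≤ A.card), A.card
        ≤ ∑ _A ∈ I.parts.filter (fun A => 2 ≤ A.card), 2 := Finset.sum_le_sum this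
      _ = (I.parts.filter (fun A => 2 ≤ A.card)).card * 2 := by
          rw [Finset.sum_const, smul_eq_mul]
      _ ≤ _ := by omega
  omega

/-- Vanishing criterion for the intermediate Hodge numbers.  For nonnegative integers
`a j i` (`j < m`, `i < n`, `n ≥ 3`) with column sums `Σⱼ a j i = 3`, the quantity
`Σ_{I ∈ Π_n, |I| ≤ n−2} (ε_I − δ_I) ∏_{A ∈ I} (Σⱼ ∏_{i∈A} a j i)` vanishes iff
(a) every row has at most two nonzero entries, and (b) for all `j₁, j₂` and pairwise
distinct `i₁, i₂, i₃, i₄`, `a_{j₁}^{i₁} a_{j₁}^{i₂} a_{j₂}^{i₃} a_{j₂}^{i₄} = 0`.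
Here `Π_n` is the set of set partitions of `{1,…,n}`, `ε_I = ∏_{A∈I}(|A|−1)!`, and
`δ_I = 1` iff exactly one block of `I` has size `≥ 2`. -/
theorem intermediate_hodge_vanishing {m n : ℕ} (hn : 3 ≤ n)
    (a : Fin m → Fin n → ℕ) (hsum : ∀ i, ∑ j, a j i = 3) :
    (∑ I ∈ (Finset.univ.filter
          (fun I : Finpartition (Finset.univ : Finset (Fin n)) => I.parts.card ≤ n - 2)),
        ((∏ A ∈ I.parts, (Nat.factorial (A.card - 1) : ℤ))
            - (if (I.parts.filter (fun A => 2 ≤ A.card)).card = 1 then 1 else 0))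
          * ∏ A ∈ I.parts, (∑ j, ∏ i ∈ A, (a j i : ℤ)) = 0)
      ↔ ((∀ j, (Finset.univ.filter (fun i => a j i ≠ 0)).card ≤ 2)
          ∧ (∀ j₁ j₂ : Fin m, ∀ i₁ i₂ i₃ i₄ : Fin n,
              i₁ ≠ i₂ → i₁ ≠ i₃ → i₁ ≠ i₄ → i₂ ≠ i₃ → i₂ ≠ i₄ → i₃ ≠ i₄ →
              a j₁ i₁ * a j₁ i₂ * a j₂ i₃ * a j₂ i₄ = 0)) := by
  have hprodnonneg : ∀ I : Finpartition (Finset.univ : Finset (Fin n)),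
      (0 : ℤ) ≤ ∏ A ∈ I.parts, (∑ j, ∏ i ∈ A, (a j i : ℤ)) := fun I =>
    Finset.prod_nonneg fun A _ => Finset.sum_nonneg fun j _ =>
      Finset.prod_nonneg fun i _ => Int.natCast_nonneg _
  rw [Finset.sum_eq_zero_iff_of_nonneg (fun I hI => by
    have hc := coeff_ge_one hn I (Finset.mem_filter.1 hI).2
    exact mul_nonneg (by linarith) (hprodnonneg I))]
  have key : ∀ I ∈ (Finset.univ.filter
      (fun I : Finpartition (Finset.univ : Finset (Fin n)) => I.parts.card ≤ n - 2)),
      (((∏ A ∈ I.parts, (Nat.factorial (A.card - 1) : ℤ))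
            - (if (I.parts.filter (fun A => 2 ≤ A.card)).card = 1 then 1 else 0))
          * ∏ A ∈ I.parts, (∑ j, ∏ i ∈ A, (a j i : ℤ)) = 0)
      ↔ (∏ A ∈ I.parts, (∑ j, ∏ i ∈ A, (a j i : ℤ)) = 0) := by
    intro I hI
    have hc := coeff_ge_one hn I (Finset.mem_filter.1 hI).2
    constructor
    · intro h
      rcases mul_eq_zero.1 h with h | h
      · omega
      · exact h
    · intro h; rw [h, mul_zero]
  constructor
  · -- forward direction
    intro h
    constructor
    · -- condition (a)
      intro j
      by_contra hcard
      push_neg at hcard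
      obtain ⟨i₁, i₂, i₃, hi₁, hi₂, hi₃, h12, h13, h23⟩ := Finset.two_lt_card_iff.1 hcard
      rw [Finset.mem_filter] at hi₁ hi₂ hi₃
      set B : Finset (Finset (Fin n)) := {({i₁, i₂, i₃} : Finset (Fin n))} with hB
      have hne : ∀ A ∈ B, A.Nonempty := by
        intro A hA
        rw [hB, Finset.mem_singleton] at hA
        subst hA
        exact ⟨i₁, by simp⟩
      have hdisj : (B : Set (Finset (Fin n))).PairwiseDisjoint id := by
        rw [hB]; simp
      set I := padPartition B hne hdisj with hIdef
      have hsup : B.sup id = ({i₁, i₂, i₃} : Finset (Fin n)) := by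
        rw [hB, Finset.sup_singleton]; rfl
      have hcard3 : ({i₁, i₂, i₃} : Finset (Fin n)).card = 3 := by
        rw [Finset.card_insert_of_notMem (by simp [h12, h13]),
          Finset.card_insert_of_notMem (by simp [h23]), Finset.card_singleton]
      have hImem : I ∈ Finset.univ.filter
          (fun I : Finpartition (Finset.univ : Finset (Fin n)) => I.parts.card ≤ n - 2) := by
        rw [Finset.mem_filter]
        refine ⟨Finset.mem_univ _, ?_⟩
        rw [hIdef, padPartition_card, hsup, hcard3, hB, Finset.card_singleton]
        omega
      have hzero := (key I hImem).1 (h I hImem)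
      rw [hIdef, padPartition_prod, hsup, hB, Finset.prod_singleton] at hzero
      have hsing : ∀ i : Fin n, (∑ j', ∏ i' ∈ ({i} : Finset (Fin n)), (a j' i' : ℤ)) = 3 := by
        intro i
        simp only [Finset.prod_singleton]
        rw [← Nat.cast_sum, hsum i]
        norm_num
      rw [Finset.prod_congr rfl (fun i _ => hsing i), Finset.prod_const] at hzero
      have h3pow : (3 : ℤ) ^ (Finset.univ \ ({i₁, i₂, i₃} : Finset (Fin n))).card ≠ 0 := by
        positivity
      have hS : (∑ j', ∏ i ∈ ({i₁, i₂, i₃} : Finset (Fin n)), (a j' i : ℤ)) = 0 := by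
        rcases mul_eq_zero.1 hzero with h' | h'
        · exact h'
        · exact absurd h' h3pow
      have hterm := (Finset.sum_eq_zero_iff_of_nonneg (fun j' _ =>
        Finset.prod_nonneg fun i _ => Int.natCast_nonneg _)).1 hS j (Finset.mem_univ j)
      obtain ⟨i, hi, hzero'⟩ := Finset.prod_eq_zero_iff.1 hterm
      have haz : a j i = 0 := by exact_mod_cast hzero'
      simp only [Finset.mem_insert, Finset.mem_singleton] at hi
      rcases hi with rfl | rfl | rfl
      · exact hi₁.2 haz
      · exact hi₂.2 haz
      · exact hi₃.2 haz
    · -- condition (b)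
      intro j₁ j₂ i₁ i₂ i₃ i₄ h12 h13 h14 h23 h24 h34
      by_contra hcon
      have ha1 : a j₁ i₁ ≠ 0 := fun h' => hcon (by rw [h']; ring)
      have ha2 : a j₁ i₂ ≠ 0 := fun h' => hcon (by rw [h']; ring)
      have ha3 : a j₂ i₃ ≠ 0 := fun h' => hcon (by rw [h']; ring)
      have ha4 : a j₂ i₄ ≠ 0 := fun h' => hcon (by rw [h']; ring)
      set B : Finset (Finset (Fin n)) :=
        {({i₁, i₂} : Finset (Fin n)), ({i₃, i₄} : Finset (Fin n))} with hB
      have hABne : ({i₁, i₂} : Finset (Fin n)) ≠ ({i₃, i₄} : Finset (Fin n)) := by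
        intro h'
        have : i₁ ∈ ({i₃, i₄} : Finset (Fin n)) := h' ▸ (by simp)
        simp only [Finset.mem_insert, Finset.mem_singleton] at this
        rcases this with h'' | h'' <;> [exact h13 h''; exact h14 h'']
      have hABdisj : Disjoint ({i₁, i₂} : Finset (Fin n)) ({i₃, i₄} : Finset (Fin n)) := by
        simp only [Finset.disjoint_left, Finset.mem_insert, Finset.mem_singleton]
        rintro x (rfl | rfl) <;> rintro (h' | h') <;> simp_all
      have hne : ∀ A ∈ B, A.Nonempty := by
        intro A hA
        rw [hB, Finset.mem_insert, Finset.mem_singleton] at hA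
        rcases hA with rfl | rfl
        · exact ⟨i₁, by simp⟩
        · exact ⟨i₃, by simp⟩
      have hdisj : (B : Set (Finset (Fin n))).PairwiseDisjoint id := by
        rw [hB]
        intro x hx y hy hxy
        simp only [Finset.coe_insert, Finset.coe_singleton, Set.mem_insert_iff,
          Set.mem_singleton_iff] at hx hy
        rcases hx with rfl | rfl <;> rcases hy with rfl | rfl
        · exact absurd rfl hxy
        · exact hABdisj
        · exact hABdisj.symm
        · exact absurd rfl hxy
      set I := padPartition B hne hdisj with hIdef
      have hsup : B.sup id = ({i₁, i₂, i₃, i₄} : Finset (Fin n)) := by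
        rw [hB, Finset.sup_insert, Finset.sup_singleton]
        ext x
        simp only [id_eq, Finset.sup_eq_union, Finset.mem_union, Finset.mem_insert,
          Finset.mem_singleton]
        tauto
      have hcard4 : ({i₁, i₂, i₃, i₄} : Finset (Fin n)).card = 4 := by
        rw [Finset.card_insert_of_notMem (by simp [h12, h13, h14]),
          Finset.card_insert_of_notMem (by simp [h23, h24]),
          Finset.card_insert_of_notMem (by simp [h34]), Finset.card_singleton]
      have hImem : I ∈ Finset.univ.filter
          (fun I : Finpartition (Finset.univ : Finset (Fin n)) => I.parts.card ≤ n - 2) := by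
        rw [Finset.mem_filter]
        refine ⟨Finset.mem_univ _, ?_⟩
        rw [hIdef, padPartition_card, hsup, hcard4, hB,
          Finset.card_insert_of_notMem (by simpa using hABne), Finset.card_singleton]
        have h4n : 4 ≤ n := by
          have hle := Finset.card_le_univ ({i₁, i₂, i₃, i₄} : Finset (Fin n))
          rw [Fintype.card_fin] at hle
          omega
        omega
      have hzero := (key I hImem).1 (h I hImem)
      rw [hIdef, padPartition_prod, hsup, hB, Finset.prod_insert (by simpa using hABne),
        Finset.prod_singleton] at hzero
      have hsing : ∀ i : Fin n, (∑ j', ∏ i' ∈ ({i} : Finset (Fin n)), (a j' i' : ℤ)) = 3 := by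
        intro i
        simp only [Finset.prod_singleton]
        rw [← Nat.cast_sum, hsum i]
        norm_num
      rw [Finset.prod_congr rfl (fun i _ => hsing i), Finset.prod_const] at hzero
      have h3pow : (3 : ℤ) ^ (Finset.univ \ ({i₁, i₂, i₃, i₄} : Finset (Fin n))).card ≠ 0 := by
        positivity
      have hS : (∑ j', ∏ i ∈ ({i₁, i₂} : Finset (Fin n)), (a j' i : ℤ)) = 0
          ∨ (∑ j', ∏ i ∈ ({i₃, i₄} : Finset (Fin n)), (a j' i : ℤ)) = 0 := by
        rcases mul_eq_zero.1 hzero with h' | h'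
        · exact (mul_eq_zero.1 h').imp id id
        · exact absurd h' h3pow
      rcases hS with hS | hS
      · have hterm := (Finset.sum_eq_zero_iff_of_nonneg (fun j' _ =>
          Finset.prod_nonneg fun i _ => Int.natCast_nonneg _)).1 hS j₁ (Finset.mem_univ j₁)
        obtain ⟨i, hi, hzero'⟩ := Finset.prod_eq_zero_iff.1 hterm
        have haz : a j₁ i = 0 := by exact_mod_cast hzero'
        simp only [Finset.mem_insert, Finset.mem_singleton] at hi
        rcases hi with rfl | rfl
        · exact ha1 haz
        · exact ha2 haz
      · have hterm := (Finset.sum_eq_zero_iff_of_nonneg (fun j' _ =>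
          Finset.prod_nonneg fun i _ => Int.natCast_nonneg _)).1 hS j₂ (Finset.mem_univ j₂)
        obtain ⟨i, hi, hzero'⟩ := Finset.prod_eq_zero_iff.1 hterm
        have haz : a j₂ i = 0 := by exact_mod_cast hzero'
        simp only [Finset.mem_insert, Finset.mem_singleton] at hi
        rcases hi with rfl | rfl
        · exact ha3 haz
        · exact ha4 haz
  · -- reverse direction
    rintro ⟨ha, hb⟩ I hI
    rw [key I hI]
    have hIcard := (Finset.mem_filter.1 hI).2
    rcases shape_lemma hn I hIcard with ⟨A, hA, hA3⟩ | ⟨A, hA, C, hC, hAC, hA2, hC2⟩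
    · -- a block of size ≥ 3
      refine Finset.prod_eq_zero hA ?_
      refine Finset.sum_eq_zero fun j _ => ?_
      by_contra hne0
      have hall : ∀ i ∈ A, a j i ≠ 0 := by
        intro i hi hzero
        exact hne0 (Finset.prod_eq_zero hi (by exact_mod_cast hzero))
      have hsub : A ⊆ Finset.univ.filter (fun i => a j i ≠ 0) := fun i hi =>
        Finset.mem_filter.2 ⟨Finset.mem_univ _, hall i hi⟩
      have := Finset.card_le_card hsub
      have := ha j
      omega
    · -- two distinct blocks of size ≥ 2
      have hdisjAC : Disjoint A C := I.disjoint hA hC hAC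
      have hSzero : (∑ j, ∏ i ∈ A, (a j i : ℤ)) = 0
          ∨ (∑ j, ∏ i ∈ C, (a j i : ℤ)) = 0 := by
        by_contra hcon
        push_neg at hcon
        obtain ⟨hSA, hSC⟩ := hcon
        have hjA : ∃ j, ∏ i ∈ A, (a j i : ℤ) ≠ 0 := by
          by_contra h'
          push_neg at h'
          exact hSA (Finset.sum_eq_zero fun j _ => h' j)
        have hjC : ∃ j, ∏ i ∈ C, (a j i : ℤ) ≠ 0 := by
          by_contra h'
          push_neg at h'
          exact hSC (Finset.sum_eq_zero fun j _ => h' j)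
        obtain ⟨j₁, hj₁⟩ := hjA
        obtain ⟨j₂, hj₂⟩ := hjC
        obtain ⟨i₁, i₂, hi₁, hi₂, h12⟩ := Finset.one_lt_card_iff.1 hA2
        obtain ⟨i₃, i₄, hi₃, hi₄, h34⟩ := Finset.one_lt_card_iff.1 hC2
        have h13 : i₁ ≠ i₃ := fun h' => Finset.disjoint_left.1 hdisjAC hi₁ (h' ▸ hi₃)
        have h14 : i₁ ≠ i₄ := fun h' => Finset.disjoint_left.1 hdisjAC hi₁ (h' ▸ hi₄)
        have h23 : i₂ ≠ i₃ := fun h' => Finset.disjoint_left.1 hdisjAC hi₂ (h' ▸ hi₃)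
        have h24 : i₂ ≠ i₄ := fun h' => Finset.disjoint_left.1 hdisjAC hi₂ (h' ▸ hi₄)
        have hbz := hb j₁ j₂ i₁ i₂ i₃ i₄ h12 h13 h14 h23 h24 h34
        have hne1 : a j₁ i₁ ≠ 0 := by
          intro hzero
          exact hj₁ (Finset.prod_eq_zero hi₁ (by exact_mod_cast hzero))
        have hne2 : a j₁ i₂ ≠ 0 := by
          intro hzero
          exact hj₁ (Finset.prod_eq_zero hi₂ (by exact_mod_cast hzero))
        have hne3 : a j₂ i₃ ≠ 0 := by
          intro hzero
          exact hj₂ (Finset.prod_eq_zero hi₃ (by exact_mod_cast hzero))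
        have hne4 : a j₂ i₄ ≠ 0 := by
          intro hzero
          exact hj₂ (Finset.prod_eq_zero hi₄ (by exact_mod_cast hzero))
        simp only [Nat.mul_eq_zero] at hbz
        tauto
      rcases hSzero with h' | h'
      · exact Finset.prod_eq_zero hA h'
      · exact Finset.prod_eq_zero hC h'
end
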